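/- arXiv:2407.01466 — 7 statements merged into one kernel-verified Lean document; each statement's English description precedes it below -/
import Mathlib

section
/- Let n be a positive integer and p ∈ (0,1). Let ℓ₂(n,p) denote the expected number of pairs 1 ≤ i < j ≤ n that have no straight path with at most 2 edges in H ~ D(K_n,p). Then ℓ(n,p) ≤ ℓ₂(n,p) ≤ n/p². -/
/-!
For `i < j`, the wedges `i k j` with `i < k < j` have pairwise disjoint edge sets, so in
`D(K_n, p)` each is present with probability `p²`, independently of the others (inclusion–exclusion
over the wedges computes this exactly). If none is present, no straight path of at most two edges
joins `i` to `j`; hence the pair is counted in `ℓ₂` with probability at most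
`(1 - p²)^(j - i - 1)`, and summing the geometric series over `j` gives at most `1/p²` for each
`i`. The bound `ℓ ≤ ℓ₂` holds outcome by outcome, since a 2-hop straight path is a straight path.
-/

open Finset

attribute [local instance] Classical.propDecidable

noncomputable section

/-- There is a straight path (strictly increasing vertex sequence) from `i` to `j` in `H`. -/
def HasStraightPath {n : ℕ} (H : SimpleGraph (Fin n)) (i j : Fin n) : Prop :=
  ∃ (m : ℕ) (f : Fin (m + 1) → Fin n),
    f 0 = i ∧ f (Fin.last m) = j ∧ StrictMono f ∧
    ∀ t : Fin m, H.Adj (f t.castSucc) (f t.succ)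

/-- There is a straight path from `i` to `j` in `H` using at most `k` edges. -/
def HasStraightPathHop {n : ℕ} (H : SimpleGraph (Fin n)) (i j : Fin n) (k : ℕ) : Prop :=
  ∃ (m : ℕ) (f : Fin (m + 1) → Fin n), m ≤ k ∧
    f 0 = i ∧ f (Fin.last m) = j ∧ StrictMono f ∧
    ∀ t : Fin m, H.Adj (f t.castSucc) (f t.succ)

/-- The deficiency: number of pairs `i < j` with no straight path from `i` to `j`. -/
def deficiency {n : ℕ} (H : SimpleGraph (Fin n)) : ℕ :=
  (Finset.univ.filter fun pq : Fin n × Fin n =>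
    pq.1 < pq.2 ∧ ¬ HasStraightPath H pq.1 pq.2).card

/-- Expectation of `F` over the random subgraph of `G` keeping each edge
independently with probability `p`. -/
def graphExpect {V : Type} [Fintype V] (G : SimpleGraph V) (p : ℝ)
    (F : SimpleGraph V → ℝ) : ℝ :=
  ∑ S ∈ G.edgeFinset.powerset,
    p ^ S.card * (1 - p) ^ (G.edgeFinset.card - S.card) *
      F (SimpleGraph.fromEdgeSet (S : Set (Sym2 V)))

/-- Probability of the event `A` for the random subgraph of `G` keeping each edge
independently with probability `p`. -/
def graphProb {V : Type} [Fintype V] (G : SimpleGraph V) (p : ℝ)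
    (A : SimpleGraph V → Prop) : ℝ :=
  ∑ S ∈ G.edgeFinset.powerset.filter
      (fun (S : Finset (Sym2 V)) => A (SimpleGraph.fromEdgeSet (S : Set (Sym2 V)))),
    p ^ S.card * (1 - p) ^ (G.edgeFinset.card - S.card)

/-- The optimal deficiency `ℓ(n,p)`: expected deficiency of `D(K_n, p)`. -/
def optDeficiency (n : ℕ) (p : ℝ) : ℝ :=
  graphExpect (⊤ : SimpleGraph (Fin n)) p (fun H => (deficiency H : ℝ))

/-- `ℓ₂(n,p)`: the expected number of pairs `i < j` with no straight path using at
most `2` edges in `D(K_n, p)`. -/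
def ellTwo (n : ℕ) (p : ℝ) : ℝ :=
  graphExpect (⊤ : SimpleGraph (Fin n)) p (fun H =>
    ((Finset.univ.filter fun pq : Fin n × Fin n =>
      pq.1 < pq.2 ∧ ¬ HasStraightPathHop H pq.1 pq.2 2).card : ℝ))


def randomSubsetExpect {α : Type*} (A : Finset α) (p : ℝ) (F : Finset α → ℝ) : ℝ :=
  ∑ S ∈ A.powerset, p ^ #S * (1 - p) ^ (#A - #S) * F S

section RandomSubset

variable {α : Type*} {A : Finset α} {p : ℝ} {F G : Finset α → ℝ}

theorem graphExpect_eq_randomSubsetExpect {V : Type} [Fintype V] (H : SimpleGraph V)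
    (F : SimpleGraph V → ℝ) :
    graphExpect H p F = randomSubsetExpect H.edgeFinset p (fun S => F (.fromEdgeSet ↑S)) :=
  rfl

theorem randomSubsetExpect_congr (h : ∀ S ⊆ A, F S = G S) :
    randomSubsetExpect A p F = randomSubsetExpect A p G :=
  sum_congr rfl fun S hS => by rw [h S (mem_powerset.1 hS)]

theorem randomSubsetExpect_mono (hp0 : 0 ≤ p) (hp1 : p ≤ 1) (h : ∀ S ⊆ A, F S ≤ G S) :
    randomSubsetExpect A p F ≤ randomSubsetExpect A p G :=
  sum_le_sum fun S hS => mul_le_mul_of_nonneg_left (h S (mem_powerset.1 hS))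
    (mul_nonneg (pow_nonneg hp0 _) (pow_nonneg (sub_nonneg.2 hp1) _))

theorem randomSubsetExpect_sum {ι : Type*} (s : Finset ι) (F : ι → Finset α → ℝ) :
    randomSubsetExpect A p (fun S => ∑ i ∈ s, F i S) = ∑ i ∈ s, randomSubsetExpect A p (F i) := by
  simp only [randomSubsetExpect, mul_sum]
  exact sum_comm

theorem randomSubsetExpect_const_mul (c : ℝ) :
    randomSubsetExpect A p (fun S => c * F S) = c * randomSubsetExpect A p F := by
  simp only [randomSubsetExpect, mul_sum, mul_left_comm c]

theorem randomSubsetExpect_prod_ite [DecidableEq α] (f g : α → ℝ) :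
    randomSubsetExpect A p (fun S => ∏ e ∈ A, if e ∈ S then f e else g e) =
      ∏ e ∈ A, (p * f e + (1 - p) * g e) := by
  rw [prod_add, randomSubsetExpect]
  refine sum_congr rfl fun S hS => ?_
  rw [mem_powerset] at hS
  rw [prod_ite, filter_mem_eq_inter, inter_eq_right.2 hS, filter_notMem_eq_sdiff,
    prod_mul_distrib, prod_mul_distrib, prod_const, prod_const, card_sdiff_of_subset hS]
  ring

theorem randomSubsetExpect_indicator_subset [DecidableEq α] {B : Finset α} (hB : B ⊆ A) :
    randomSubsetExpect A p (fun S => if B ⊆ S then 1 else 0) = p ^ #B := by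
  have hind : ∀ S ⊆ A, (if B ⊆ S then (1 : ℝ) else 0) =
      ∏ e ∈ A, if e ∈ S then 1 else if e ∈ B then 0 else 1 := by
    intro S hS
    rw [prod_ite, filter_notMem_eq_sdiff, prod_const_one, one_mul]
    simp only [← ite_not (_ ∈ B), prod_boole]
    exact if_congr (by grind) rfl rfl
  rw [randomSubsetExpect_congr hind, randomSubsetExpect_prod_ite]
  simp only [mul_one, mul_ite, mul_zero, add_ite, add_zero, add_sub_cancel]
  rw [prod_ite_mem, inter_eq_right.2 hB, prod_const]

theorem randomSubsetExpect_prod_one_sub_indicator [DecidableEq α] {ι : Type*} (K : Finset ι)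
    (B : ι → Finset α) (hBA : ∀ k ∈ K, B k ⊆ A) (hB : (K : Set ι).PairwiseDisjoint B) :
    randomSubsetExpect A p (fun S => ∏ k ∈ K, (1 - if B k ⊆ S then 1 else 0)) =
      ∏ k ∈ K, (1 - p ^ #(B k)) := by
  have hexpand : ∀ S, ∏ k ∈ K, (1 - if B k ⊆ S then (1 : ℝ) else 0) =
      ∑ T ∈ K.powerset, (-1) ^ #T * if T.biUnion B ⊆ S then 1 else 0 := by
    intro S
    rw [prod_sub]
    refine sum_congr rfl fun T _ => ?_
    rw [prod_const_one, mul_one, prod_boole]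
    simp only [biUnion_subset]
  calc randomSubsetExpect A p _
      = ∑ T ∈ K.powerset, (-1) ^ #T * p ^ #(T.biUnion B) := by
        rw [randomSubsetExpect_congr fun S _ => hexpand S, randomSubsetExpect_sum]
        refine sum_congr rfl fun T hT => ?_
        rw [randomSubsetExpect_const_mul, randomSubsetExpect_indicator_subset
          (biUnion_subset.2 fun k hk => hBA k (mem_powerset.1 hT hk))]
    _ = ∏ k ∈ K, (1 - p ^ #(B k)) := by
        rw [prod_sub]
        refine sum_congr rfl fun T hT => ?_
        rw [prod_const_one, mul_one, card_biUnion (hB.subset (mem_powerset.1 hT)),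
          prod_pow_eq_pow_sum]

end RandomSubset

section StraightPath

variable {n : ℕ} {H : SimpleGraph (Fin n)} {i j k : Fin n}

theorem HasStraightPathHop.hasStraightPath {t : ℕ} (h : HasStraightPathHop H i j t) :
    HasStraightPath H i j :=
  let ⟨m, f, _, hf⟩ := h
  ⟨m, f, hf⟩

theorem hasStraightPathHop_two_of_adj (hik : i < k) (hkj : k < j) (h₁ : H.Adj i k)
    (h₂ : H.Adj k j) : HasStraightPathHop H i j 2 := by
  refine ⟨2, ![i, k, j], le_rfl, rfl, rfl, Fin.strictMono_iff_lt_succ.2 fun t => ?_, fun t => ?_⟩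
  · fin_cases t
    exacts [hik, hkj]
  · fin_cases t
    exacts [h₁, h₂]

end StraightPath

section Wedge

variable {V : Type*} {i j k : V}

def wedgeEdges [DecidableEq V] (i k j : V) : Finset (Sym2 V) := {s(i, k), s(k, j)}

theorem card_wedgeEdges [DecidableEq V] (hij : i ≠ j) : #(wedgeEdges i k j) = 2 :=
  card_pair fun h => hij (by grind [Sym2.eq_iff])

theorem pairwiseDisjoint_wedgeEdges [DecidableEq V] {s : Set V} (hi : i ∉ s) :
    s.PairwiseDisjoint fun k => wedgeEdges i k j := by
  intro k hk k' hk' hne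
  simp only [Function.onFun, wedgeEdges, disjoint_insert_left, disjoint_insert_right,
    disjoint_singleton, mem_insert, mem_singleton, Sym2.eq_iff]
  grind

end Wedge

section TwoHop

variable {n : ℕ} {i j : Fin n} {p : ℝ}

theorem indicator_not_hasStraightPathHop_two_le_prod (S : Finset (Sym2 (Fin n))) :
    (if ¬ HasStraightPathHop (.fromEdgeSet ↑S) i j 2 then 1 else 0 : ℝ) ≤
      ∏ k ∈ Ioo i j, (1 - if wedgeEdges i k j ⊆ S then 1 else 0) := by
  split_ifs with h
  · exact prod_nonneg fun k _ => by split_ifs <;> norm_num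
  · refine (prod_eq_one fun k hk => ?_).ge
    rw [if_neg, sub_zero]
    intro hS
    obtain ⟨hik, hkj⟩ := mem_Ioo.1 hk
    have hS := insert_subset_iff.1 hS
    exact h (hasStraightPathHop_two_of_adj hik hkj ⟨hS.1, hik.ne⟩
      ⟨singleton_subset_iff.1 hS.2, hkj.ne⟩)

theorem graphExpect_not_hasStraightPathHop_two_le (hp0 : 0 ≤ p) (hp1 : p ≤ 1) (hij : i < j) :
    graphExpect ⊤ p (fun H => if ¬ HasStraightPathHop H i j 2 then 1 else 0) ≤
      (1 - p ^ 2) ^ #(Ioo i j) := by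
  rw [graphExpect_eq_randomSubsetExpect]
  calc _ ≤ randomSubsetExpect _ p
        (fun S => ∏ k ∈ Ioo i j, (1 - if wedgeEdges i k j ⊆ S then 1 else 0)) :=
        randomSubsetExpect_mono hp0 hp1 fun S _ => indicator_not_hasStraightPathHop_two_le_prod S
    _ = ∏ k ∈ Ioo i j, (1 - p ^ #(wedgeEdges i k j)) :=
        randomSubsetExpect_prod_one_sub_indicator _ _
          (fun k hk => by
            simp [wedgeEdges, insert_subset_iff, (mem_Ioo.1 hk).1.ne, (mem_Ioo.1 hk).2.ne])
          (pairwiseDisjoint_wedgeEdges (by simp))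
    _ = (1 - p ^ 2) ^ #(Ioo i j) := by
        rw [prod_congr rfl fun k _ => by rw [card_wedgeEdges hij.ne], prod_const]

end TwoHop

theorem sum_Ioi_pow_card_Ioo_le {n : ℕ} (i : Fin n) {q : ℝ} (hq0 : 0 ≤ q) (hq1 : q < 1) :
    ∑ j ∈ Ioi i, q ^ #(Ioo i j) ≤ 1 / (1 - q) :=
  calc ∑ j ∈ Ioi i, q ^ #(Ioo i j)
      = ∑ m ∈ Ico ((i : ℕ) + 1) n, q ^ (m - (i + 1)) := by
        rw [Ico_add_one_left_eq_Ioo, ← Fin.map_valEmbedding_Ioi, sum_map]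
        simp [Fin.card_Ioo, Nat.sub_sub]
    _ = ∑ d ∈ range (n - (i + 1)), q ^ d := by simp [sum_Ico_eq_sum_range]
    _ ≤ 1 / (1 - q) := by simpa using geom_sum_Ico_le_of_lt_one (m := 0) hq0 hq1

theorem stmt_1_general (n : ℕ) (p : ℝ) (hp : p ∈ Set.Ioo (0 : ℝ) 1) :
    optDeficiency n p ≤ ellTwo n p ∧ ellTwo n p ≤ (n : ℝ) / p ^ 2 := by
  obtain ⟨hp0, hp1⟩ := hp
  refine ⟨randomSubsetExpect_mono hp0.le hp1.le fun S _ => ?_, ?_⟩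
  · exact Nat.cast_le.2 <| card_le_card <| monotone_filter_right _
      fun _ _ => And.imp_right (mt HasStraightPathHop.hasStraightPath)
  calc ellTwo n p
      = ∑ i : Fin n, ∑ j : Fin n, graphExpect ⊤ p
          (fun H => if i < j ∧ ¬ HasStraightPathHop H i j 2 then 1 else 0) := by
        simp only [ellTwo, natCast_card_filter, graphExpect_eq_randomSubsetExpect,
          randomSubsetExpect_sum, Fintype.sum_prod_type]
    _ ≤ ∑ i : Fin n, ∑ j ∈ Ioi i, (1 - p ^ 2) ^ #(Ioo i j) := by
        refine sum_le_sum fun i _ => ?_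
        rw [← filter_lt_eq_Ioi, sum_filter]
        refine sum_le_sum fun j _ => ?_
        by_cases hij : i < j
        · simpa [hij] using graphExpect_not_hasStraightPathHop_two_le hp0.le hp1.le hij
        · simp [hij, graphExpect]
    _ ≤ ∑ _i : Fin n, 1 / p ^ 2 := sum_le_sum fun i _ => by
        have h := sum_Ioi_pow_card_Ioo_le i (q := 1 - p ^ 2) (by nlinarith) (by nlinarith)
        rwa [sub_sub_cancel] at h
    _ = n / p ^ 2 := by simp [div_eq_mul_inv]

theorem stmt_1 (n : ℕ) (hn : 0 < n) (p : ℝ) (hp : p ∈ Set.Ioo (0 : ℝ) 1) :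
    optDeficiency n p ≤ ellTwo n p ∧ ellTwo n p ≤ (n : ℝ) / p ^ 2 :=
  stmt_1_general n p hp
end
end

section
/- There is an integer constant c₀ ≥ 37 such that the following holds for every integer c ≥ c₀ and every p ∈ (0,1) with M = c/p an integer. Let B and B' be disjoint finite sets of size M, let S ⊆ B be nonempty with |S| = u, and include each edge of S × B' in a random bipartite graph independently with probability p. Let Y be the number of vertices of B' incident to at least one included edge. Then P[Y ≥ min(2u, M/3)] ≥ 1/2. -/
open Finset

attribute [local instance] Classical.propDecidable

noncomputable section

/-- Expectation of `F` over the random subset of `E` keeping each pair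
independently with probability `ρ`. -/
def bipExpect {α : Type} (E : Finset (α × α)) (ρ : ℝ) (F : Finset (α × α) → ℝ) : ℝ :=
  ∑ T ∈ E.powerset, ρ ^ T.card * (1 - ρ) ^ (E.card - T.card) * F T

/-- Probability of the event `A` for the random subset of `E` keeping each pair
independently with probability `ρ`. -/
def bipProb {α : Type} (E : Finset (α × α)) (ρ : ℝ) (A : Finset (α × α) → Prop) : ℝ :=
  ∑ T ∈ E.powerset.filter (fun (T : Finset (α × α)) => A T),
    ρ ^ T.card * (1 - ρ) ^ (E.card - T.card)

/-- Number of vertices of `C` incident to at least one included pair of `T`. -/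
def coveredCount {α : Type} (C : Finset α) (T : Finset (α × α)) : ℕ :=
  (C.filter fun c => ∃ a, (a, c) ∈ T).card

/-- `|Γ(S)|`: number of vertices of `R` joined by a pair of `T` to some vertex of `S`. -/
def nbrCount {α : Type} (S R : Finset α) (T : Finset (α × α)) : ℕ :=
  (R.filter fun r => ∃ s ∈ S, (s, r) ∈ T).card

/-!
Let `θ = 1 - (1 - p) ^ u`. A vertex of `B'` is covered unless all `u` of its potential edges
are missing, and distinct vertices of `B'` see disjoint sets of edges; hence `Y` is binomial
with parameters `M` and `θ`. Bernoulli's inequality gives `θ ≥ u p / (1 + u p) ≥ min (u p, 2) / 3`,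
so with `M p = c ≥ 37` the threshold `min (2u, M/3)` is at most half the mean `M θ ≥ 8`.
Chebyshev's inequality then bounds the lower tail by
`M θ (1 - θ) / (M θ / 2) ^ 2 ≤ 4 / (M θ) ≤ 1/2`.
-/

lemma sum_powerset_union_of_disjoint {β M : Type*} [DecidableEq β] [AddCommMonoid M]
    {s t : Finset β} (h : Disjoint s t) (f : Finset β → M) :
    ∑ W ∈ (s ∪ t).powerset, f W = ∑ A ∈ s.powerset, ∑ B ∈ t.powerset, f (A ∪ B) := by
  induction t using Finset.induction_on generalizing f with
  | empty => simp
  | @insert a t ha ih =>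
    have has : a ∉ s := Finset.disjoint_right.1 h (mem_insert_self a t)
    have h' : Disjoint s t := h.mono_right (subset_insert a t)
    rw [union_insert, sum_powerset_insert (by simp [has, ha]), ih h', ih h', ← sum_add_distrib]
    refine sum_congr rfl fun A _ => ?_
    simp only [sum_powerset_insert ha, union_insert]

section
variable {α : Type}

lemma bipProb_eq_bipExpect (E : Finset (α × α)) (ρ : ℝ) (A : Finset (α × α) → Prop) :
    bipProb E ρ A = bipExpect E ρ (fun T => if A T then 1 else 0) := by
  simp only [bipProb, bipExpect, mul_ite, mul_one, mul_zero, sum_filter]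

lemma bipExpect_congr {E : Finset (α × α)} {ρ : ℝ} {F G : Finset (α × α) → ℝ}
    (h : ∀ T ⊆ E, F T = G T) : bipExpect E ρ F = bipExpect E ρ G :=
  sum_congr rfl fun T hT => by rw [h T (mem_powerset.1 hT)]

lemma bipExpect_add (E : Finset (α × α)) (ρ a b : ℝ) (F G : Finset (α × α) → ℝ) :
    bipExpect E ρ (fun T => a * F T + b * G T) = a * bipExpect E ρ F + b * bipExpect E ρ G := by
  simp only [bipExpect, mul_sum, ← sum_add_distrib]
  exact sum_congr rfl fun _ _ => by ring

lemma bipExpect_union {E₁ E₂ : Finset (α × α)} (h : Disjoint E₁ E₂) (ρ : ℝ)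
    (F : Finset (α × α) → ℝ) :
    bipExpect (E₁ ∪ E₂) ρ F = bipExpect E₁ ρ fun A => bipExpect E₂ ρ fun U => F (A ∪ U) := by
  unfold bipExpect
  rw [sum_powerset_union_of_disjoint h]
  refine sum_congr rfl fun A hA => ?_
  rw [mul_sum]
  refine sum_congr rfl fun U hU => ?_
  rw [mem_powerset] at hA hU
  have hA' := card_le_card hA
  have hU' := card_le_card hU
  rw [card_union_of_disjoint h, card_union_of_disjoint (h.mono hA hU),
    show #E₁ + #E₂ - (#A + #U) = (#E₁ - #A) + (#E₂ - #U) by omega, pow_add, pow_add]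
  ring

lemma bipExpect_ite_nonempty (E : Finset (α × α)) (ρ x y : ℝ) :
    bipExpect E ρ (fun U => if U.Nonempty then x else y) =
      (1 - ρ) ^ #E * y + (1 - (1 - ρ) ^ #E) * x := by
  have hsplit : ∀ U : Finset (α × α),
      (if U.Nonempty then x else y) = x + if U = ∅ then y - x else 0 := by
    intro U
    rcases U.eq_empty_or_nonempty with rfl | hU
    · simp
    · simp [hU, hU.ne_empty]
  simp only [bipExpect, hsplit, mul_add, sum_add_distrib, ← sum_mul, sum_pow_mul_eq_add_pow,
    mul_ite, mul_zero, sum_ite_eq', empty_mem_powerset, add_sub_cancel, one_pow, one_mul,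
    if_true, card_empty, pow_zero, tsub_zero]
  ring

lemma coveredCount_insert_union {S C : Finset α} {b : α} (hb : b ∉ C)
    {A U : Finset (α × α)} (hA : A ⊆ S ×ˢ C) (hU : U ⊆ S ×ˢ {b}) :
    coveredCount (insert b C) (A ∪ U) =
      if U.Nonempty then coveredCount C A + 1 else coveredCount C A := by
  have hAb : ∀ a, (a, b) ∉ A := fun a h => hb (mem_product.1 (hA h)).2
  have hUC : ∀ a c, c ∈ C → (a, c) ∉ U := fun a c hc h => by
    have hcb : c = b := by simpa using (mem_product.1 (hU h)).2
    exact hb (hcb ▸ hc)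
  have hbU : (∃ a, (a, b) ∈ U) ↔ U.Nonempty :=
    ⟨fun ⟨a, h⟩ => ⟨_, h⟩, fun ⟨x, hx⟩ => ⟨x.1, by
      rwa [← mem_singleton.1 (mem_product.1 (hU hx)).2]⟩⟩
  have hfilter : C.filter (fun c => ∃ a, (a, c) ∈ A ∪ U) = C.filter (fun c => ∃ a, (a, c) ∈ A) :=
    filter_congr fun c hc => by simp [hUC _ c hc]
  unfold coveredCount
  rw [filter_insert, hfilter]
  split_ifs with h₁ h₂ h₂
  · rw [card_insert_of_notMem (by simp [hb])]
  · simp [hAb, hbU, h₂] at h₁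
  · simp [hAb, hbU, h₂] at h₁
  · rfl
end

def binomialExpect (n : ℕ) (θ : ℝ) (g : ℕ → ℝ) : ℝ :=
  ∑ k ∈ range (n + 1), n.choose k * θ ^ k * (1 - θ) ^ (n - k) * g k

lemma binomialExpect_eq_sum_powerset {β : Type*} (C : Finset β) (θ : ℝ) (g : ℕ → ℝ) :
    binomialExpect #C θ g = ∑ W ∈ C.powerset, θ ^ #W * (1 - θ) ^ (#C - #W) * g #W := by
  rw [sum_powerset_apply_card (fun k => θ ^ k * (1 - θ) ^ (#C - k) * g k)]
  simp only [binomialExpect, nsmul_eq_mul, mul_assoc]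

lemma binomialExpect_succ (n : ℕ) (θ : ℝ) (g : ℕ → ℝ) :
    binomialExpect (n + 1) θ g =
      (1 - θ) * binomialExpect n θ g + θ * binomialExpect n θ (fun k => g (k + 1)) := by
  have hn : ∀ g, binomialExpect n θ g =
      ∑ W ∈ (range n).powerset, θ ^ #W * (1 - θ) ^ (n - #W) * g #W := fun g => by
    simpa using binomialExpect_eq_sum_powerset (range n) θ g
  have hsucc : binomialExpect (n + 1) θ g =
      ∑ W ∈ (insert n (range n)).powerset, θ ^ #W * (1 - θ) ^ (n + 1 - #W) * g #W := by
    simpa [card_insert_of_notMem] using binomialExpect_eq_sum_powerset (insert n (range n)) θ g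
  rw [hsucc, sum_powerset_insert notMem_range_self, hn, hn, mul_sum, mul_sum]
  congr 1 <;> refine sum_congr rfl fun W hW => ?_
  · have hW := card_le_card (mem_powerset.1 hW)
    rw [card_range] at hW
    rw [show n + 1 - #W = n - #W + 1 by omega, pow_succ]
    ring
  · have hnW : n ∉ W := fun h => notMem_range_self (mem_powerset.1 hW h)
    rw [card_insert_of_notMem hnW, Nat.add_sub_add_right, pow_succ]
    ring

lemma binomialExpect_one (n : ℕ) (θ : ℝ) : binomialExpect n θ (fun _ => 1) = 1 := by
  simpa [binomialExpect, bernsteinPolynomial, Polynomial.eval_finsetSum, mul_comm] using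
    congr_arg (Polynomial.eval θ) (bernsteinPolynomial.sum ℝ n)

lemma binomialExpect_sub_sq (n : ℕ) (θ : ℝ) :
    binomialExpect n θ (fun k => (n * θ - k) ^ 2) = n * θ * (1 - θ) := by
  simpa [binomialExpect, bernsteinPolynomial, Polynomial.eval_finsetSum, mul_comm, mul_assoc,
    mul_left_comm] using
    congr_arg (Polynomial.eval θ) (bernsteinPolynomial.variance ℝ n)

lemma sum_filter_le_abs_le_sum_mul_sq_div {ι : Type*} (s : Finset ι) {w X : ι → ℝ}
    (hw : ∀ i ∈ s, 0 ≤ w i) {a : ℝ} (ha : 0 < a) :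
    ∑ i ∈ s with a ≤ |X i|, w i ≤ (∑ i ∈ s, w i * X i ^ 2) / a ^ 2 := by
  rw [le_div_iff₀ (by positivity), sum_mul]
  calc ∑ i ∈ s with a ≤ |X i|, w i * a ^ 2
      ≤ ∑ i ∈ s with a ≤ |X i|, w i * X i ^ 2 :=
        sum_le_sum fun i hi => by
          have ⟨hs, hX⟩ := mem_filter.1 hi
          exact mul_le_mul_of_nonneg_left (sq_abs (X i) ▸ pow_le_pow_left₀ ha.le hX 2) (hw i hs)
    _ ≤ ∑ i ∈ s, w i * X i ^ 2 :=
        sum_le_sum_of_subset_of_nonneg (filter_subset _ _) fun i hi _ =>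
          mul_nonneg (hw i hi) (sq_nonneg _)

lemma half_le_binomial_upper_tail {n : ℕ} {θ t : ℝ} (hθ0 : 0 ≤ θ) (hθ1 : θ ≤ 1)
    (hmean : 8 ≤ n * θ) (ht : t ≤ n * θ / 2) :
    1 / 2 ≤ binomialExpect n θ (fun k => if t ≤ k then 1 else 0) := by
  set w : ℕ → ℝ := fun k => n.choose k * θ ^ k * (1 - θ) ^ (n - k)
  have hw : ∀ k ∈ range (n + 1), 0 ≤ w k := fun k _ => by
    have : 0 ≤ 1 - θ := by linarith
    positivity
  have htotal : ∑ k ∈ range (n + 1), w k = 1 := by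
    simpa only [binomialExpect, mul_one] using binomialExpect_one n θ
  have hvar : ∑ k ∈ range (n + 1), w k * (n * θ - k) ^ 2 = n * θ * (1 - θ) :=
    binomialExpect_sub_sq n θ
  have hlow : ∑ k ∈ range (n + 1) with ¬ t ≤ ((k : ℕ) : ℝ), w k ≤ 1 / 2 :=
    calc ∑ k ∈ range (n + 1) with ¬ t ≤ ((k : ℕ) : ℝ), w k
        ≤ ∑ k ∈ range (n + 1) with n * θ / 2 ≤ |n * θ - ((k : ℕ) : ℝ)|, w k :=
          sum_le_sum_of_subset_of_nonneg
            (fun k hk => by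
              rw [mem_filter] at hk ⊢
              exact ⟨hk.1, le_abs.2 (Or.inl (by linarith [not_le.1 hk.2]))⟩)
            fun k hk _ => hw k (mem_filter.1 hk).1
      _ ≤ n * θ * (1 - θ) / (n * θ / 2) ^ 2 :=
          hvar ▸ sum_filter_le_abs_le_sum_mul_sq_div _ hw (by linarith)
      _ ≤ 1 / 2 := by
          rw [div_le_iff₀ (by positivity)]
          nlinarith
  have hsplit := sum_filter_add_sum_filter_not (range (n + 1)) (fun k : ℕ => t ≤ k) w
  rw [htotal] at hsplit
  simp only [binomialExpect, mul_ite, mul_one, mul_zero, ← sum_filter]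
  linarith

lemma bipExpect_coveredCount {α : Type} (ρ : ℝ) (S C : Finset α) (g : ℕ → ℝ) :
    bipExpect (S ×ˢ C) ρ (fun T => g (coveredCount C T)) =
      binomialExpect #C (1 - (1 - ρ) ^ #S) g := by
  induction C using Finset.induction_on generalizing g with
  | empty => simp [bipExpect, binomialExpect, coveredCount]
  | @insert b C hb ih =>
    have hprod : S ×ˢ insert b C = S ×ˢ C ∪ S ×ˢ {b} := by
      rw [insert_eq, product_union, union_comm]
    have hdisj : Disjoint (S ×ˢ C) (S ×ˢ {b}) :=
      disjoint_product.2 (Or.inr (disjoint_singleton_right.2 hb))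
    calc bipExpect (S ×ˢ insert b C) ρ (fun T => g (coveredCount (insert b C) T))
        = bipExpect (S ×ˢ C) ρ (fun A => (1 - ρ) ^ #S * g (coveredCount C A) +
            (1 - (1 - ρ) ^ #S) * g (coveredCount C A + 1)) := by
          rw [hprod, bipExpect_union hdisj]
          refine bipExpect_congr fun A hA => ?_
          rw [bipExpect_congr (G := fun U => if U.Nonempty then g (coveredCount C A + 1)
            else g (coveredCount C A)) fun U hU => by
              rw [coveredCount_insert_union hb hA hU, apply_ite g],
            bipExpect_ite_nonempty, card_product, card_singleton, mul_one]
      _ = _ := by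
          rw [bipExpect_add, ih, ih (fun k => g (k + 1)), card_insert_of_notMem hb,
            binomialExpect_succ, sub_sub_cancel]

lemma min_div_three_le_one_sub_one_sub_pow {p : ℝ} (hp0 : 0 ≤ p) (hp1 : p ≤ 1) (u : ℕ) :
    min (u * p) 2 / 3 ≤ 1 - (1 - p) ^ u := by
  have hq : 0 ≤ (1 - p) ^ u := pow_nonneg (by linarith) u
  have hbernoulli : (1 - p) ^ u * (1 + u * p) ≤ 1 :=
    calc (1 - p) ^ u * (1 + u * p) ≤ (1 - p) ^ u * (1 + p) ^ u :=
          mul_le_mul_of_nonneg_left (one_add_mul_le_pow (by linarith) u) hq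
      _ = (1 - p ^ 2) ^ u := by rw [← mul_pow]; ring
      _ ≤ 1 := pow_le_one₀ (by nlinarith) (by nlinarith)
  have hup : 0 ≤ u * p := by positivity
  rcases le_total (u * p) 2 with h | h
  · rw [min_eq_left h]; nlinarith
  · rw [min_eq_right h]; nlinarith

lemma threshold_le_half_mean {c M u p θ : ℝ} (hc : 37 ≤ c) (hu : 1 ≤ u) (hp0 : 0 < p)
    (hp1 : p < 1) (hMp : M * p = c) (hθ : min (u * p) 2 / 3 ≤ θ) :
    8 ≤ M * θ ∧ min (2 * u) (M / 3) ≤ M * θ / 2 := by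
  have hM : c < M := by nlinarith
  rcases le_total (u * p) 2 with h | h
  · rw [min_eq_left h] at hθ
    have hcu : c * u ≤ 3 * (M * θ) := by nlinarith
    constructor <;> nlinarith [min_le_left (2 * u) (M / 3)]
  · rw [min_eq_right h] at hθ
    constructor <;> nlinarith [min_le_right (2 * u) (M / 3)]

theorem stmt_2 :
    ∃ c₀ : ℕ, 37 ≤ c₀ ∧
      ∀ c : ℕ, c₀ ≤ c →
      ∀ p : ℝ, p ∈ Set.Ioo (0 : ℝ) 1 →
      ∀ M : ℕ, (M : ℝ) = (c : ℝ) / p →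
      ∀ (α : Type) (B B' : Finset α), Disjoint B B' → B.card = M → B'.card = M →
      ∀ S : Finset α, S ⊆ B → S.Nonempty →
        (1 : ℝ) / 2 ≤ bipProb (S ×ˢ B') p
          (fun T => min (2 * (S.card : ℝ)) ((M : ℝ) / 3) ≤ (coveredCount B' T : ℝ)) := by
  refine ⟨37, le_rfl, fun c hc p ⟨hp0, hp1⟩ M hM α B B' _ _ hB' S _ hS => ?_⟩
  have hMp : (M : ℝ) * p = c := by rw [hM]; field_simp
  have hq : 0 ≤ (1 - p) ^ #S := pow_nonneg (by linarith) _
  have hq1 : (1 - p) ^ #S ≤ 1 := pow_le_one₀ (by linarith) (by linarith)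
  obtain ⟨hmean, ht⟩ := threshold_le_half_mean (by exact_mod_cast hc)
    (by exact_mod_cast hS.card_pos) hp0 hp1 hMp
    (min_div_three_le_one_sub_one_sub_pow hp0.le hp1.le #S)
  rw [bipProb_eq_bipExpect, bipExpect_coveredCount p S B'
    (fun k => if min (2 * (#S : ℝ)) ((M : ℝ) / 3) ≤ k then 1 else 0), hB']
  exact half_le_binomial_upper_tail (by linarith) (by linarith) hmean ht
end
end

section
/- There is a constant C > 0 such that for every positive integer n and every p ∈ (0,1), the optimal deficiency satisfies ℓ(n,p) ≤ C·(n/p)·log(2/p). -/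
open Finset

attribute [local instance] Classical.propDecidable

noncomputable section

/-!
Fix the target `j` and reveal the vertices `u = j - 1, …, 0` one at a time. Straight paths from
vertices above `u` never use edges at `u`, so given all other edges, `u` reaches `j` exactly when
one of its `m` edges into the current reach set of `j` is present: it misses with probability
`q ^ m`, `q = 1 - p`, and otherwise the reach set grows by one. The potential
`Φ m = ∑_{m ≤ i ≤ n} q ^ i / (1 - q ^ i)` is built so that the expected number of misses so far
plus `E[Φ m]` stays equal to `Φ 1`; hence at most `Φ 1` vertices below `j` miss `j` in
expectation. Finally AM-GM on `1 + q + ⋯ + q ^ (i - 1)` gives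
`q ^ i / (1 - q ^ i) ≤ √q ^ i / (p i)`, so `Φ 1 ≤ -log (1 - √q) / p ≤ log (2 / p) / p`.
-/

section SubsetExpect

variable {α : Type*}

def subsetExpect (p : ℝ) (A : Finset α) (f : Finset α → ℝ) : ℝ :=
  ∑ S ∈ A.powerset, p ^ #S * (1 - p) ^ (#A - #S) * f S

variable {p : ℝ} {A B : Finset α} {f g : Finset α → ℝ}

lemma subsetExpect_const (p : ℝ) (A : Finset α) (c : ℝ) : subsetExpect p A (fun _ => c) = c := by
  rw [subsetExpect, ← sum_mul, sum_pow_mul_eq_add_pow, add_sub_cancel, one_pow, one_mul]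

lemma subsetExpect_congr (h : ∀ S ⊆ A, f S = g S) : subsetExpect p A f = subsetExpect p A g :=
  sum_congr rfl fun S hS => by rw [h S (mem_powerset.1 hS)]

lemma subsetExpect_mono (hp0 : 0 ≤ p) (hp1 : p ≤ 1) (h : ∀ S ⊆ A, f S ≤ g S) :
    subsetExpect p A f ≤ subsetExpect p A g := by
  have : 0 ≤ 1 - p := sub_nonneg.2 hp1
  exact sum_le_sum fun S hS => mul_le_mul_of_nonneg_left (h S (mem_powerset.1 hS)) (by positivity)

lemma subsetExpect_add :
    subsetExpect p A (fun S => f S + g S) = subsetExpect p A f + subsetExpect p A g := by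
  simp only [subsetExpect, mul_add, sum_add_distrib]

lemma subsetExpect_sum {ι : Type*} (s : Finset ι) (f : ι → Finset α → ℝ) :
    subsetExpect p A (fun S => ∑ i ∈ s, f i S) = ∑ i ∈ s, subsetExpect p A (f i) := by
  simp only [subsetExpect, mul_sum]
  exact sum_comm

lemma subsetExpect_union [DecidableEq α] (h : Disjoint A B) (f : Finset α → ℝ) :
    subsetExpect p (A ∪ B) f =
      subsetExpect p A (fun S => subsetExpect p B (fun T => f (S ∪ T))) := by
  simp only [subsetExpect, mul_sum, ← sum_product']
  refine sum_nbij' (fun S => (S ∩ A, S ∩ B)) (fun P => P.1 ∪ P.2) ?_ ?_ ?_ ?_ ?_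
  · intro S _
    simp [inter_subset_right]
  · intro P hP
    simp only [mem_product, mem_powerset] at hP ⊢
    exact union_subset_union hP.1 hP.2
  · intro S hS
    simp only [mem_powerset] at hS
    rw [← inter_union_distrib_left, inter_eq_left.2 hS]
  · intro P hP
    simp only [mem_product, mem_powerset] at hP
    have h1 := disjoint_of_subset_left hP.1 h
    have h2 := disjoint_of_subset_left hP.2 h.symm
    simp [union_inter_distrib_right, inter_eq_left.2 hP.1, inter_eq_left.2 hP.2,
      disjoint_iff_inter_eq_empty.1 h1, disjoint_iff_inter_eq_empty.1 h2]
  · intro S hS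
    simp only [mem_powerset] at hS
    have hSA : S ∩ A ∪ S ∩ B = S := by rw [← inter_union_distrib_left, inter_eq_left.2 hS]
    have hcard : #S = #(S ∩ A) + #(S ∩ B) := by
      rw [← card_union_of_disjoint (h.mono inter_subset_right inter_subset_right), hSA]
    have hA : #(S ∩ A) ≤ #A := card_le_card inter_subset_right
    have hB : #(S ∩ B) ≤ #B := card_le_card inter_subset_right
    rw [hSA, card_union_of_disjoint h, hcard,
      show #A + #B - (#(S ∩ A) + #(S ∩ B)) = (#A - #(S ∩ A)) + (#B - #(S ∩ B)) by omega]
    ring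

lemma subsetExpect_ite_eq_empty [DecidableEq α] (p : ℝ) (A : Finset α) (c₀ c₁ : ℝ) :
    subsetExpect p A (fun S => if S = ∅ then c₀ else c₁) =
      (1 - p) ^ #A * c₀ + (1 - (1 - p) ^ #A) * c₁ := by
  have hsplit : ∀ S : Finset α,
      (if S = ∅ then c₀ else c₁) = c₁ + if S = ∅ then c₀ - c₁ else 0 := by
    intro S
    split_ifs <;> ring
  simp only [hsplit, subsetExpect_add (f := fun _ => c₁), subsetExpect_const]
  simp only [subsetExpect, mul_ite, mul_zero, sum_ite_eq', mem_powerset, empty_subset,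
    ↓reduceIte, card_empty, pow_zero, tsub_zero, one_mul]
  ring

lemma subsetExpect_ite_disjoint [DecidableEq α] {T : Finset α} (hT : T ⊆ A) (c₀ c₁ : ℝ) :
    subsetExpect p A (fun S => if Disjoint S T then c₀ else c₁) =
      (1 - p) ^ #T * c₀ + (1 - (1 - p) ^ #T) * c₁ := by
  rw [← sdiff_union_of_subset hT, subsetExpect_union sdiff_disjoint]
  have hinner : ∀ S ⊆ A \ T,
      subsetExpect p T (fun U => if Disjoint (S ∪ U) T then c₀ else c₁) =
        subsetExpect p T (fun U => if U = ∅ then c₀ else c₁) := by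
    intro S hS
    refine subsetExpect_congr fun U hU => if_congr ?_ rfl rfl
    rw [disjoint_union_left, and_iff_right (disjoint_of_subset_left hS sdiff_disjoint)]
    exact ⟨fun h => (disjoint_self_iff_empty _).1 (h.mono_right hU),
      fun h => h ▸ disjoint_empty_left _⟩
  rw [subsetExpect_congr hinner, subsetExpect_const, subsetExpect_ite_eq_empty]

end SubsetExpect

section StraightPath

variable {n : ℕ} {H H' : SimpleGraph (Fin n)} {i j : Fin n}

lemma HasStraightPath.refl (H : SimpleGraph (Fin n)) (j : Fin n) : HasStraightPath H j j :=
  ⟨0, fun _ => j, rfl, rfl, fun a b hab => by omega, fun t => t.elim0⟩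

lemma HasStraightPath.le (h : HasStraightPath H i j) : i ≤ j := by
  obtain ⟨m, f, rfl, rfl, hf, -⟩ := h
  exact hf.monotone (Fin.zero_le _)

lemma HasStraightPath.of_adj (hadj : ∀ a b, i ≤ a → a < b → H.Adj a b → H'.Adj a b)
    (h : HasStraightPath H i j) : HasStraightPath H' i j := by
  obtain ⟨m, f, h0, hl, hf, hfadj⟩ := h
  refine ⟨m, f, h0, hl, hf, fun t => hadj _ _ ?_ (hf t.castSucc_lt_succ) (hfadj t)⟩
  exact h0 ▸ hf.monotone (Fin.zero_le _)

lemma hasStraightPath_congr_of_lt {k : Fin n}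
    (hadj : ∀ a b, k < a → k < b → (H.Adj a b ↔ H'.Adj a b)) (hki : k < i) :
    HasStraightPath H i j ↔ HasStraightPath H' i j := by
  have hadj' : ∀ a b, i ≤ a → a < b → (H.Adj a b ↔ H'.Adj a b) := fun a b ha hab =>
    hadj a b (hki.trans_le ha) ((hki.trans_le ha).trans hab)
  exact ⟨.of_adj fun a b ha hab => (hadj' a b ha hab).1,
    .of_adj fun a b ha hab => (hadj' a b ha hab).2⟩

lemma hasStraightPath_iff_exists_adj (hij : i < j) :
    HasStraightPath H i j ↔ ∃ v, i < v ∧ H.Adj i v ∧ HasStraightPath H v j := by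
  constructor
  · rintro ⟨_ | m, f, h0, hl, hf, hfadj⟩
    · exact absurd (h0.symm.trans hl) hij.ne
    · refine ⟨f 1, h0 ▸ hf Fin.zero_lt_one, h0 ▸ hfadj 0, m, f ∘ Fin.succ, rfl, ?_,
        hf.comp (Fin.strictMono_succ), fun t => ?_⟩
      · simpa using hl
      · simpa only [Function.comp_apply, Fin.succ_castSucc] using hfadj t.succ
  · rintro ⟨v, hiv, hadj, m, f, h0, hl, hf, hfadj⟩
    refine ⟨m + 1, Fin.cons i f, rfl, by simpa [← Fin.succ_last] using hl, ?_, fun t => ?_⟩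
    · refine Fin.strictMono_iff_lt_succ.2 fun t => ?_
      cases t using Fin.cases with
      | zero => simpa [h0] using hiv
      | succ t => simpa [← Fin.succ_castSucc] using hf t.castSucc_lt_succ
    · cases t using Fin.cases with
      | zero => simpa [h0] using hadj
      | succ t => simpa [← Fin.succ_castSucc] using hfadj t

end StraightPath

section ReachSet

variable {n : ℕ} {H H' : SimpleGraph (Fin n)} {j : Fin n}

def reachSet (H : SimpleGraph (Fin n)) (j : Fin n) (k : ℕ) : Finset (Fin n) :=
  {v : Fin n | k ≤ (v : ℕ) ∧ HasStraightPath H v j}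

lemma reachSet_self (H : SimpleGraph (Fin n)) (j : Fin n) : reachSet H j j = {j} := by
  refine eq_singleton_iff_unique_mem.2 ⟨by simp [reachSet, HasStraightPath.refl], fun v hv => ?_⟩
  simp only [reachSet, mem_filter, mem_univ, true_and] at hv
  exact le_antisymm hv.2.le (Fin.le_def.2 hv.1)

lemma one_le_card_reachSet {k : ℕ} (hk : k ≤ j) : 1 ≤ #(reachSet H j k) :=
  card_pos.2 ⟨j, by simp [reachSet, hk, HasStraightPath.refl]⟩

lemma card_reachSet_le (H : SimpleGraph (Fin n)) (j : Fin n) (k : ℕ) : #(reachSet H j k) ≤ n :=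
  (card_filter_le _ _).trans_eq (card_fin n)

lemma card_reachSet_eq_add (H : SimpleGraph (Fin n)) (j u : Fin n) :
    #(reachSet H j u) = #(reachSet H j (u + 1)) + if HasStraightPath H u j then 1 else 0 := by
  simp only [reachSet, card_filter]
  rw [← Fintype.sum_ite_eq' u (fun v => if HasStraightPath H v j then 1 else 0),
    ← sum_add_distrib]
  refine sum_congr rfl fun v _ => ?_
  by_cases h : v = u
  · subst h
    simp
  · have : (u : ℕ) ≤ v ↔ (u : ℕ) + 1 ≤ v := by have := Fin.val_ne_of_ne h; omega
    simp [h, this]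

lemma reachSet_congr {u : Fin n} (hadj : ∀ a b, u < a → u < b → (H.Adj a b ↔ H'.Adj a b)) :
    reachSet H j (u + 1) = reachSet H' j (u + 1) :=
  filter_congr fun _ _ => and_congr_right fun hv =>
    hasStraightPath_congr_of_lt hadj (Fin.lt_def.2 hv)

end ReachSet

section RandomEdges

open SimpleGraph

variable {n : ℕ} {S₁ S₂ : Finset (Sym2 (Fin n))} {u j : Fin n}

lemma fromEdgeSet_union_adj_iff (h₂ : ∀ e ∈ S₂, u ∈ e) {a b : Fin n} (ha : a ≠ u) (hb : b ≠ u) :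
    (fromEdgeSet ↑(S₁ ∪ S₂)).Adj a b ↔ (fromEdgeSet ↑S₁).Adj a b := by
  simp only [fromEdgeSet_adj, coe_union, Set.mem_union, mem_coe]
  refine ⟨fun ⟨h, hab⟩ => ⟨h.resolve_right fun h => ?_, hab⟩, fun ⟨h, hab⟩ => ⟨.inl h, hab⟩⟩
  rcases Sym2.mem_iff.1 (h₂ _ h) with rfl | rfl <;> contradiction

lemma reachSet_fromEdgeSet_union (h₂ : ∀ e ∈ S₂, u ∈ e) :
    reachSet (fromEdgeSet ↑(S₁ ∪ S₂)) j (u + 1) = reachSet (fromEdgeSet ↑S₁) j (u + 1) :=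
  reachSet_congr fun _ _ ha hb => fromEdgeSet_union_adj_iff h₂ ha.ne' hb.ne'

def reachEdges (H : SimpleGraph (Fin n)) (j u : Fin n) : Finset (Sym2 (Fin n)) :=
  (reachSet H j (u + 1)).image (fun v => s(u, v))

lemma card_reachEdges (H : SimpleGraph (Fin n)) (j u : Fin n) :
    #(reachEdges H j u) = #(reachSet H j (u + 1)) :=
  card_image_of_injective _ fun _ _ => Sym2.congr_right.1

lemma reachEdges_subset (H : SimpleGraph (Fin n)) (j u : Fin n) :
    reachEdges H j u ⊆ {e ∈ (⊤ : SimpleGraph (Fin n)).edgeFinset | u ∈ e} := by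
  intro e he
  obtain ⟨v, hv, rfl⟩ := mem_image.1 he
  have huv : u ≠ v := by
    simp only [reachSet, mem_filter] at hv
    exact Fin.ne_of_lt (Fin.lt_def.2 hv.2.1)
  simp [huv]

lemma hasStraightPath_fromEdgeSet_union_iff (huj : u < j) (h₁ : ∀ e ∈ S₁, u ∉ e)
    (h₂ : ∀ e ∈ S₂, u ∈ e) :
    HasStraightPath (fromEdgeSet ↑(S₁ ∪ S₂)) u j ↔
      ¬ Disjoint S₂ (reachEdges (fromEdgeSet ↑S₁) j u) := by
  have hpath : ∀ v, u < v → (HasStraightPath (fromEdgeSet ↑(S₁ ∪ S₂)) v j ↔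
      HasStraightPath (fromEdgeSet ↑S₁) v j) := fun v huv =>
    hasStraightPath_congr_of_lt (fun _ _ ha hb => fromEdgeSet_union_adj_iff h₂ ha.ne' hb.ne') huv
  rw [hasStraightPath_iff_exists_adj huj, not_disjoint_iff]
  constructor
  · rintro ⟨v, huv, hadj, hv⟩
    have hmem : s(u, v) ∈ S₁ ∪ S₂ := (fromEdgeSet_adj _).1 hadj |>.1
    refine ⟨s(u, v), (mem_union.1 hmem).resolve_left fun h => h₁ _ h (Sym2.mem_mk_left _ _),
      mem_image_of_mem _ ?_⟩
    exact mem_filter.2 ⟨mem_univ _, Fin.lt_def.1 huv, (hpath v huv).1 hv⟩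
  · rintro ⟨e, he₂, he⟩
    obtain ⟨v, hv, rfl⟩ := mem_image.1 he
    simp only [reachSet, mem_filter, mem_univ, true_and] at hv
    have huv : u < v := Fin.lt_def.2 hv.1
    exact ⟨v, huv, (fromEdgeSet_adj _).2 ⟨mem_union_right _ he₂, huv.ne⟩, (hpath v huv).2 hv.2⟩

/-- Straight paths from vertices above `u` avoid the edges at `u`; so, given the other edges,
`u` reaches `j` unless all the edges `reachEdges` from `u` into the reach set are missing. -/
lemma subsetExpect_ite_hasStraightPath (p : ℝ) (huj : u < j) (g₀ g₁ : ℕ → ℝ) :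
    subsetExpect p (⊤ : SimpleGraph (Fin n)).edgeFinset (fun S =>
        if HasStraightPath (fromEdgeSet ↑S) u j then g₁ #(reachSet (fromEdgeSet ↑S) j (u + 1))
        else g₀ #(reachSet (fromEdgeSet ↑S) j (u + 1))) =
      subsetExpect p (⊤ : SimpleGraph (Fin n)).edgeFinset (fun S =>
        (1 - p) ^ #(reachSet (fromEdgeSet ↑S) j (u + 1)) *
            g₀ #(reachSet (fromEdgeSet ↑S) j (u + 1)) +
          (1 - (1 - p) ^ #(reachSet (fromEdgeSet ↑S) j (u + 1))) *
            g₁ #(reachSet (fromEdgeSet ↑S) j (u + 1))) := by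
  set E := (⊤ : SimpleGraph (Fin n)).edgeFinset
  have hE : E = {e ∈ E | u ∉ e} ∪ {e ∈ E | u ∈ e} := by
    rw [union_comm, filter_union_filter_not_eq]
  have hdisj : Disjoint {e ∈ E | u ∉ e} {e ∈ E | u ∈ e} := (disjoint_filter_filter_not _ _ _).symm
  rw [hE, subsetExpect_union hdisj, subsetExpect_union hdisj]
  refine subsetExpect_congr fun S₁ hS₁ => ?_
  have h₁ : ∀ e ∈ S₁, u ∉ e := fun e he => (mem_filter.1 (hS₁ he)).2
  have hreach : ∀ S₂ ⊆ {e ∈ E | u ∈ e},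
      reachSet (fromEdgeSet ↑(S₁ ∪ S₂)) j (u + 1) = reachSet (fromEdgeSet ↑S₁) j (u + 1) :=
    fun S₂ hS₂ => reachSet_fromEdgeSet_union fun e he => (mem_filter.1 (hS₂ he)).2
  set T := reachEdges (fromEdgeSet ↑S₁) j u
  calc
    _ = subsetExpect p {e ∈ E | u ∈ e} (fun S₂ =>
          if Disjoint S₂ T then g₀ #(reachSet (fromEdgeSet ↑S₁) j (u + 1))
          else g₁ #(reachSet (fromEdgeSet ↑S₁) j (u + 1))) := by
      refine subsetExpect_congr fun S₂ hS₂ => ?_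
      rw [hasStraightPath_fromEdgeSet_union_iff huj h₁
        (fun e he => (mem_filter.1 (hS₂ he)).2), hreach S₂ hS₂]
      by_cases hd : Disjoint S₂ T <;> simp [T, hd]
    _ = _ := by
      rw [subsetExpect_ite_disjoint (reachEdges_subset _ j u), card_reachEdges,
        subsetExpect_congr (fun S₂ hS₂ => by rw [hreach S₂ hS₂]), subsetExpect_const]

end RandomEdges

section Potential

variable {p : ℝ}

def potential (p : ℝ) (N m : ℕ) : ℝ :=
  ∑ i ∈ Ico m (N + 1), (1 - p) ^ i / (1 - (1 - p) ^ i)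

lemma potential_nonneg (hp0 : 0 ≤ p) (hp1 : p ≤ 1) (N m : ℕ) : 0 ≤ potential p N m := by
  refine sum_nonneg fun i _ => div_nonneg (pow_nonneg (by linarith) _) (sub_nonneg.2 ?_)
  exact pow_le_one₀ (by linarith) (by linarith)

/-- The defining property of the potential: `(1 - p) ^ m` is the probability that `u` misses the
target when `m` vertices above `u` reach it. -/
lemma potential_step (hp0 : 0 < p) (hp1 : p ≤ 1) {N m : ℕ} (hm : 1 ≤ m) (hmN : m ≤ N) :
    (1 - p) ^ m * (1 + potential p N m) + (1 - (1 - p) ^ m) * potential p N (m + 1) =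
      potential p N m := by
  have hq : (1 - p) ^ m < 1 := pow_lt_one₀ (by linarith) (by linarith) (by omega)
  have hsplit : potential p N m = (1 - p) ^ m / (1 - (1 - p) ^ m) + potential p N (m + 1) :=
    sum_eq_sum_Ico_succ_bot (by omega) _
  rw [hsplit]
  field_simp [(sub_pos.2 hq).ne']
  ring

lemma nat_mul_pow_le_geom_sum_sq {y : ℝ} (hy0 : 0 ≤ y) (hy1 : y ≤ 1) (m : ℕ) :
    m * y ^ m ≤ ∑ i ∈ range m, (y ^ 2) ^ i := by
  have hpair : ∀ i ∈ range m, 2 * y ^ m ≤ (y ^ 2) ^ i + (y ^ 2) ^ (m - 1 - i) := by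
    intro i hi
    have hi := mem_range.1 hi
    have hprod : y ^ i * y ^ (m - 1 - i) = y ^ (m - 1) := by rw [← pow_add]; congr 1; omega
    have hle : y ^ m ≤ y ^ (m - 1) := pow_le_pow_of_le_one hy0 hy1 (by omega)
    rw [pow_right_comm y 2 i, pow_right_comm y 2 (m - 1 - i)]
    nlinarith [sq_nonneg (y ^ i - y ^ (m - 1 - i))]
  have := sum_le_sum hpair
  rw [sum_add_distrib, sum_range_reflect (fun i => (y ^ 2) ^ i), sum_const, card_range,
    nsmul_eq_mul] at this
  linarith

lemma pow_div_one_sub_pow_le {y : ℝ} (hy0 : 0 ≤ y) (hy1 : y < 1) {m : ℕ} (hm : 1 ≤ m) :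
    (y ^ 2) ^ m / (1 - (y ^ 2) ^ m) ≤ y ^ m / ((1 - y ^ 2) * m) := by
  have hy2 : y ^ 2 < 1 := pow_lt_one₀ hy0 hy1 two_ne_zero
  have hgeom : (1 - y ^ 2) * (m * y ^ m) ≤ 1 - (y ^ 2) ^ m := by
    rw [← geom_sum_mul_neg (y ^ 2) m, mul_comm]
    exact mul_le_mul_of_nonneg_right (nat_mul_pow_le_geom_sum_sq hy0 hy1.le m) (by linarith)
  have hym : 0 ≤ y ^ m := pow_nonneg hy0 m
  have hm' : (0 : ℝ) < m := by exact_mod_cast hm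
  rw [div_le_div_iff₀ (by linarith [pow_lt_one₀ (by positivity) hy2 (by omega : m ≠ 0)])
    (by nlinarith)]
  have hsq : (y ^ 2) ^ m = y ^ m * y ^ m := by rw [← pow_mul, ← pow_add, two_mul]
  rw [hsq] at hgeom ⊢
  nlinarith [mul_le_mul_of_nonneg_left hgeom hym]

lemma sum_pow_div_le_neg_log {y : ℝ} (hy0 : 0 ≤ y) (hy1 : y < 1) (N : ℕ) :
    ∑ i ∈ Ico 1 (N + 1), y ^ i / i ≤ -Real.log (1 - y) := by
  have hlog := Real.hasSum_pow_div_log_of_abs_lt_one (by rwa [abs_of_nonneg hy0])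
  refine Eq.trans_le ?_ (sum_le_hasSum (range N) (fun i _ => by positivity) hlog)
  rw [sum_Ico_eq_sum_range, Nat.add_sub_cancel]
  refine sum_congr rfl fun i _ => ?_
  push_cast
  ring_nf

lemma potential_one_le (hp0 : 0 < p) (hp1 : p ≤ 1) (N : ℕ) :
    potential p N 1 ≤ Real.log (2 / p) / p := by
  set y := √(1 - p)
  have hy0 : 0 ≤ y := Real.sqrt_nonneg _
  have hy2 : y ^ 2 = 1 - p := Real.sq_sqrt (by linarith)
  have hy1 : y < 1 := by nlinarith
  have hp : p / 2 ≤ 1 - y := by nlinarith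
  calc potential p N 1
      ≤ ∑ i ∈ Ico 1 (N + 1), y ^ i / ((1 - y ^ 2) * i) := by
        refine sum_le_sum fun i hi => ?_
        rw [← hy2]
        exact pow_div_one_sub_pow_le hy0 hy1 (mem_Ico.1 hi).1
    _ = (∑ i ∈ Ico 1 (N + 1), y ^ i / i) / p := by
        rw [sum_div]
        refine sum_congr rfl fun i _ => ?_
        rw [hy2, sub_sub_cancel, mul_comm, div_div]
    _ ≤ -Real.log (1 - y) / p := by
        gcongr
        exact sum_pow_div_le_neg_log hy0 hy1 N
    _ ≤ Real.log (2 / p) / p := by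
        gcongr
        have hinv : (1 - y)⁻¹ ≤ 2 / p := by
          rw [inv_eq_one_div, div_le_div_iff₀ (by linarith) hp0]
          linarith
        rw [← Real.log_inv]
        exact Real.log_le_log (by simpa using hy1) hinv

end Potential

section Deficiency

open SimpleGraph

variable {n : ℕ} {p : ℝ}

lemma graphExpect_eq_subsetExpect {V : Type} [Fintype V] (G : SimpleGraph V) (p : ℝ)
    (F : SimpleGraph V → ℝ) :
    graphExpect G p F = subsetExpect p G.edgeFinset (fun S => F (fromEdgeSet ↑S)) :=
  rfl

lemma deficiency_eq_sum (H : SimpleGraph (Fin n)) :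
    (deficiency H : ℝ) = ∑ j, ∑ u, if u < j ∧ ¬ HasStraightPath H u j then 1 else 0 := by
  rw [deficiency, card_filter, Fintype.sum_prod_type, sum_comm]
  push_cast
  rfl

lemma optDeficiency_eq_sum (n : ℕ) (p : ℝ) :
    optDeficiency n p = ∑ j : Fin n, ∑ u : Fin n,
      subsetExpect p (⊤ : SimpleGraph (Fin n)).edgeFinset (fun S => if u < j ∧ ¬ HasStraightPath (fromEdgeSet ↑S) u j then 1 else 0) := by
  simp only [optDeficiency, graphExpect_eq_subsetExpect, deficiency_eq_sum, subsetExpect_sum]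
  -- the two sides carry different `Fintype` instances on the edge set of `⊤`
  congr!

lemma subsetExpect_not_hasStraightPath (hp0 : 0 < p) (hp1 : p ≤ 1) {u j : Fin n} (huj : u < j) :
    subsetExpect p (⊤ : SimpleGraph (Fin n)).edgeFinset
        (fun S => if HasStraightPath (fromEdgeSet ↑S) u j then 0 else 1) =
      subsetExpect p (⊤ : SimpleGraph (Fin n)).edgeFinset
          (fun S => potential p n #(reachSet (fromEdgeSet ↑S) j (u + 1))) -
        subsetExpect p (⊤ : SimpleGraph (Fin n)).edgeFinset
          (fun S => potential p n #(reachSet (fromEdgeSet ↑S) j u)) := by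
  refine eq_sub_of_add_eq ?_
  rw [← subsetExpect_add]
  have hsplit : ∀ S : Finset (Sym2 (Fin n)),
      (if HasStraightPath (fromEdgeSet ↑S) u j then 0 else 1) +
          potential p n #(reachSet (fromEdgeSet ↑S) j u) =
        if HasStraightPath (fromEdgeSet ↑S) u j
        then potential p n (#(reachSet (fromEdgeSet ↑S) j (u + 1)) + 1)
        else 1 + potential p n #(reachSet (fromEdgeSet ↑S) j (u + 1)) := by
    intro S
    rw [card_reachSet_eq_add]
    split_ifs <;> simp [add_comm]
  rw [subsetExpect_congr fun S _ => hsplit S]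
  refine (subsetExpect_ite_hasStraightPath p huj (fun m => 1 + potential p n m)
    (fun m => potential p n (m + 1))).trans
    (subsetExpect_congr fun S _ => potential_step hp0 hp1 ?_ (card_reachSet_le _ _ _))
  exact one_le_card_reachSet (Fin.lt_def.1 huj)

lemma sum_subsetExpect_not_hasStraightPath_le (hp0 : 0 < p) (hp1 : p ≤ 1) (j : Fin n) :
    ∑ u, subsetExpect p (⊤ : SimpleGraph (Fin n)).edgeFinset
        (fun S => if u < j ∧ ¬ HasStraightPath (fromEdgeSet ↑S) u j then 1 else 0) ≤
      potential p n 1 := by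
  -- capping at `j` makes the terms with `u ≥ j` vanish, so that the sum telescopes
  set g : ℕ → ℝ := fun k => subsetExpect p (⊤ : SimpleGraph (Fin n)).edgeFinset
    (fun S => potential p n #(reachSet (fromEdgeSet ↑S) j (min k j)))
  have hterm : ∀ u : Fin n, subsetExpect p (⊤ : SimpleGraph (Fin n)).edgeFinset
      (fun S => if u < j ∧ ¬ HasStraightPath (fromEdgeSet ↑S) u j then 1 else 0) =
        g (u + 1) - g u := by
    intro u
    by_cases huj : u < j
    · have hu : (u : ℕ) + 1 ≤ j := huj
      simp only [g, min_eq_left hu, min_eq_left (Nat.le_of_succ_le hu), huj, true_and]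
      rw [← subsetExpect_not_hasStraightPath hp0 hp1 huj]
      exact subsetExpect_congr fun S _ => by split_ifs <;> simp
    · have hu : (j : ℕ) ≤ u := not_lt.1 huj
      simp [g, huj, min_eq_right hu, min_eq_right (hu.trans u.val.le_succ), subsetExpect_const]
  have hgj : g n = potential p n 1 := by
    simp [g, reachSet_self, subsetExpect_const]
  have hg0 : 0 ≤ g 0 := by
    rw [← subsetExpect_const p (⊤ : SimpleGraph (Fin n)).edgeFinset 0]
    exact subsetExpect_mono hp0.le hp1 fun S _ => potential_nonneg hp0.le hp1 _ _
  rw [sum_congr rfl fun u _ => hterm u, Fin.sum_univ_eq_sum_range (fun k => g (k + 1) - g k),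
    sum_range_sub, hgj]
  linarith

end Deficiency

theorem stmt_5 :
    ∃ C : ℝ, 0 < C ∧
      ∀ n : ℕ, 0 < n → ∀ p : ℝ, p ∈ Set.Ioo (0 : ℝ) 1 →
        optDeficiency n p ≤ C * ((n : ℝ) / p) * Real.log (2 / p) := by
  refine ⟨1, one_pos, fun n _ p ⟨hp0, hp1⟩ => ?_⟩
  calc optDeficiency n p ≤ ∑ _j : Fin n, potential p n 1 := by
        rw [optDeficiency_eq_sum]
        exact sum_le_sum fun j _ => sum_subsetExpect_not_hasStraightPath_le hp0 hp1.le j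
    _ ≤ ∑ _j : Fin n, Real.log (2 / p) / p :=
        sum_le_sum fun _ _ => potential_one_le hp0 hp1.le n
    _ = 1 * ((n : ℝ) / p) * Real.log (2 / p) := by
        rw [sum_const, card_univ, Fintype.card_fin, nsmul_eq_mul]
        ring
end
end

section
/- Let p ∈ (0,1), let n ≥ 2 be an integer, and let G be a graph on [n] with m edges, where m ≤ (n/8)·log_{1/(1−p)} n. Then for H ~ D(G,p), the expected deficiency satisfies E[f(H)] ≥ n^{3/2}/8. -/
open Finset

attribute [local instance] Classical.propDecidable

noncomputable section

/-!
A straight path leaves its first vertex and enters its last one, so a vertex isolated in `H` has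
no straight path to or from any of the other `n - 1` vertices, and `f(H)` is at least
`(n - 1) / 2` times the number of isolated vertices. In `D(G, p)` the vertex `v` is isolated with
probability `(1 - p) ^ deg v`, and by convexity of `x ↦ (1 - p) ^ x` the sum of these is at least
`n (1 - p) ^ (2m / n) ≥ n · n ^ (-1/2)` under the bound on `m`.
Hence `E[f(H)] ≥ (n - 1) √n / 2`.
-/

open Finset SimpleGraph

lemma isIsolated_fromEdgeSet_iff {V : Type} {S : Finset (Sym2 V)} (hS : ∀ e ∈ S, ¬ e.IsDiag)
    (v : V) :
    (fromEdgeSet (S : Set (Sym2 V))).IsIsolated v ↔ ∀ e ∈ S, v ∉ e := by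
  simp only [IsIsolated, fromEdgeSet_adj, mem_coe, not_and]
  constructor
  · intro h e he hve
    obtain ⟨w, rfl⟩ := Sym2.mem_iff_exists.1 hve
    exact h w he fun hvw => hS _ he (Sym2.mk_isDiag_iff.2 hvw)
  · exact fun h w hw => absurd (Sym2.mem_mk_left v w) (h _ hw)

lemma sum_powerset_weight_of_subset {α : Type*} [DecidableEq α] (p : ℝ) {A E : Finset α}
    (hAE : A ⊆ E) :
    ∑ S ∈ A.powerset, p ^ #S * (1 - p) ^ (#E - #S) = (1 - p) ^ #(E \ A) := by
  calc ∑ S ∈ A.powerset, p ^ #S * (1 - p) ^ (#E - #S)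
      = ∑ S ∈ A.powerset, (1 - p) ^ #(E \ A) * (p ^ #S * (1 - p) ^ (#A - #S)) := by
        refine sum_congr rfl fun S hS => ?_
        have hSA := card_le_card (mem_powerset.1 hS)
        have hAE' := card_le_card hAE
        rw [card_sdiff_of_subset hAE, mul_left_comm, ← pow_add]
        congr 2
        omega
    _ = (1 - p) ^ #(E \ A) := by rw [← mul_sum, sum_pow_mul_eq_add_pow]; simp

section RandomSubgraph

variable {V : Type} [Fintype V] (G : SimpleGraph V) (p : ℝ)

lemma graphExpect_mono {F F' : SimpleGraph V → ℝ} (hp : p ∈ Set.Icc (0 : ℝ) 1)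
    (h : ∀ H, F H ≤ F' H) : graphExpect G p F ≤ graphExpect G p F' :=
  sum_le_sum fun _ _ => mul_le_mul_of_nonneg_left (h _)
    (mul_nonneg (pow_nonneg hp.1 _) (pow_nonneg (sub_nonneg.2 hp.2) _))

lemma graphExpect_sum {ι : Type*} (s : Finset ι) (F : ι → SimpleGraph V → ℝ) :
    graphExpect G p (fun H => ∑ i ∈ s, F i H) = ∑ i ∈ s, graphExpect G p (F i) := by
  simp only [graphExpect, mul_sum]
  exact sum_comm

lemma graphExpect_const_mul (c : ℝ) (F : SimpleGraph V → ℝ) :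
    graphExpect G p (fun H => c * F H) = c * graphExpect G p F := by
  simp only [graphExpect, mul_sum, mul_left_comm c]

lemma graphExpect_indicator (A : SimpleGraph V → Prop) :
    graphExpect G p (fun H => if A H then 1 else 0) = graphProb G p A := by
  simp [graphExpect, graphProb, sum_filter]

lemma graphProb_isIsolated (v : V) :
    graphProb G p (fun H => H.IsIsolated v) = (1 - p) ^ G.degree v := by
  have hevent : G.edgeFinset.powerset.filter
      (fun S : Finset (Sym2 V) => (fromEdgeSet (S : Set (Sym2 V))).IsIsolated v)
      = (G.edgeFinset.filter (v ∉ ·)).powerset := by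
    ext S
    simp only [mem_filter, mem_powerset, subset_iff]
    constructor
    · rintro ⟨hSG, hiso⟩ e he
      have hS : ∀ e ∈ S, ¬ e.IsDiag := fun e he => G.not_isDiag_of_mem_edgeSet
        (mem_edgeFinset.1 (hSG he))
      exact ⟨hSG he, (isIsolated_fromEdgeSet_iff hS v).1 hiso e he⟩
    · intro h
      have hS : ∀ e ∈ S, ¬ e.IsDiag := fun e he => G.not_isDiag_of_mem_edgeSet
        (mem_edgeFinset.1 (h he).1)
      exact ⟨fun e he => (h he).1, (isIsolated_fromEdgeSet_iff hS v).2 fun e he => (h he).2⟩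
  have hincident : G.edgeFinset \ G.edgeFinset.filter (v ∉ ·) = G.incidenceFinset v := by
    rw [incidenceFinset_eq_filter]
    ext e
    simp only [mem_sdiff, mem_filter]
    tauto
  rw [graphProb, hevent, sum_powerset_weight_of_subset p (filter_subset _ _), hincident,
    card_incidenceFinset_eq_degree]

end RandomSubgraph

lemma card_mul_rpow_mean_le_sum_rpow {ι : Type*} {s : Finset ι} (hs : s.Nonempty) {b : ℝ}
    (hb : 0 < b) (x : ι → ℝ) :
    #s * b ^ ((∑ i ∈ s, x i) / #s) ≤ ∑ i ∈ s, b ^ x i := by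
  have hcard : (0 : ℝ) < #s := by exact_mod_cast hs.card_pos
  have hjensen := (convexOn_rpow_left hb).map_sum_le (t := s) (w := fun _ => (#s : ℝ)⁻¹)
    (p := x) (fun _ _ => inv_nonneg.2 hcard.le) (by simp [hcard.ne']) (fun _ _ => Set.mem_univ _)
  simp only [smul_eq_mul, ← mul_sum] at hjensen
  rw [inv_mul_eq_div, inv_mul_eq_div, le_div_iff₀ hcard, mul_comm] at hjensen
  exact hjensen

lemma card_mul_rpow_le_sum_pow_degree {V : Type} [Fintype V] [Nonempty V]
    (G : SimpleGraph V) [DecidableRel G.Adj] {b : ℝ} (hb : 0 < b) :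
    Fintype.card V * b ^ (2 * #G.edgeFinset / Fintype.card V : ℝ) ≤ ∑ v, b ^ G.degree v := by
  have := card_mul_rpow_mean_le_sum_rpow univ_nonempty hb (fun v => (G.degree v : ℝ))
  simpa [← Nat.cast_sum, sum_degrees_eq_twice_card_edges, Real.rpow_natCast] using this

lemma rpow_neg_le_rpow_of_le_mul_logb {b y x c : ℝ} (hb0 : 0 < b) (hb1 : b < 1) (hy : 0 < y)
    (hx : x ≤ c * Real.logb (1 / b) y) : y ^ (-c) ≤ b ^ x := by
  have hlogb : Real.log b ≠ 0 := (Real.log_neg hb0 hb1).ne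
  have hbase : b ^ (c * Real.logb (1 / b) y) = y ^ (-c) := by
    rw [Real.rpow_def_of_pos hb0, Real.rpow_def_of_pos hy, Real.logb, one_div, Real.log_inv]
    field_simp
  exact hbase ▸ Real.rpow_le_rpow_of_exponent_ge hb0 hb1.le hx

section StraightPath

variable {n : ℕ} {H : SimpleGraph (Fin n)} {i j : Fin n}

lemma HasStraightPath.not_isIsolated_left (h : HasStraightPath H i j) (hij : i ≠ j) :
    ¬ H.IsIsolated i := by
  obtain ⟨m, f, rfl, rfl, -, hadj⟩ := h
  cases m with
  | zero => exact absurd rfl hij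
  | succ m => simpa using (hadj 0).not_isIsolated_left

lemma HasStraightPath.not_isIsolated_right (h : HasStraightPath H i j) (hij : i ≠ j) :
    ¬ H.IsIsolated j := by
  obtain ⟨m, f, rfl, rfl, -, hadj⟩ := h
  cases m with
  | zero => exact absurd rfl hij
  | succ m => simpa [Fin.succ_last] using (hadj (Fin.last m)).not_isIsolated_right

end StraightPath

lemma card_isIsolated_mul_le_deficiency {n : ℕ} (H : SimpleGraph (Fin n)) :
    #(univ.filter H.IsIsolated) * (n - 1) ≤ 2 * deficiency H := by
  set I := univ.filter H.IsIsolated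
  set D := univ.filter fun pq : Fin n × Fin n => pq.1 < pq.2 ∧ ¬ HasStraightPath H pq.1 pq.2
  set P := (I ×ˢ univ).filter fun x : Fin n × Fin n => x.1 ≠ x.2
  have hP : #P = #I * (n - 1) := by
    rw [card_filter, sum_product, card_eq_sum_ones, sum_mul]
    refine sum_congr rfl fun i _ => ?_
    rw [← card_filter, filter_ne, card_erase_of_mem (mem_univ i), card_univ, Fintype.card_fin,
      one_mul]
  have hPD : P ⊆ D ∪ D.image Prod.swap := by
    rintro ⟨i, j⟩ hij
    simp only [P, I, mem_filter, mem_product, mem_univ, and_true, true_and] at hij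
    obtain ⟨hiso, hne⟩ := hij
    rcases hne.lt_or_gt with hlt | hgt
    · exact mem_union_left _ (by simpa [D, hlt] using fun h => h.not_isIsolated_left hne hiso)
    · refine mem_union_right _ (mem_image.2 ⟨(j, i), ?_, rfl⟩)
      simpa [D, hgt] using fun h => h.not_isIsolated_right hne.symm hiso
  calc #I * (n - 1) = #P := hP.symm
    _ ≤ #(D ∪ D.image Prod.swap) := card_le_card hPD
    _ ≤ #D + #D := (card_union_le _ _).trans (Nat.add_le_add_left card_image_le _)
    _ = 2 * deficiency H := by rw [two_mul]; rfl

lemma mul_sum_pow_degree_le_graphExpect_deficiency {n : ℕ} (G : SimpleGraph (Fin n)) {p : ℝ}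
    (hp : p ∈ Set.Icc (0 : ℝ) 1) :
    ((n - 1 : ℕ) : ℝ) / 2 * ∑ i, (1 - p) ^ G.degree i
      ≤ graphExpect G p (fun H => (deficiency H : ℝ)) := by
  calc ((n - 1 : ℕ) : ℝ) / 2 * ∑ i, (1 - p) ^ G.degree i
      = graphExpect G p (fun H => ((n - 1 : ℕ) : ℝ) / 2 * #(univ.filter H.IsIsolated)) := by
        simp only [card_filter, Nat.cast_sum, Nat.cast_ite, Nat.cast_one, Nat.cast_zero,
          graphExpect_const_mul, graphExpect_sum, graphExpect_indicator, graphProb_isIsolated]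
    _ ≤ graphExpect G p (fun H => (deficiency H : ℝ)) := by
        refine graphExpect_mono G p hp fun H => ?_
        have := card_isIsolated_mul_le_deficiency H
        rw [div_mul_eq_mul_div, div_le_iff₀ two_pos]
        exact_mod_cast (mul_comm _ _).trans_le (this.trans_eq (mul_comm _ _))

theorem stmt_8 (p : ℝ) (hp : p ∈ Set.Ioo (0 : ℝ) 1) (n : ℕ) (hn : 2 ≤ n)
    (G : SimpleGraph (Fin n))
    (hm : (G.edgeFinset.card : ℝ) ≤ ((n : ℝ) / 8) * Real.logb (1 / (1 - p)) (n : ℝ)) :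
    (n : ℝ) ^ ((3 : ℝ) / 2) / 8 ≤ graphExpect G p (fun H => (deficiency H : ℝ)) := by
  obtain ⟨hp0, hp1⟩ := hp
  have : Nonempty (Fin n) := ⟨⟨0, by omega⟩⟩
  have hn0 : (0 : ℝ) < n := by positivity
  have hn2 : (2 : ℝ) ≤ n := by exact_mod_cast hn
  have hlogb : 0 ≤ Real.logb (1 / (1 - p)) n :=
    Real.logb_nonneg (by rw [lt_div_iff₀ (by linarith)]; linarith) (by linarith)
  have hmean : 2 * (#G.edgeFinset : ℝ) / n ≤ 1 / 2 * Real.logb (1 / (1 - p)) n := by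
    rw [div_le_iff₀ hn0]
    nlinarith
  have hsum : n * (n : ℝ) ^ (-(1 / 2 : ℝ)) ≤ ∑ i, (1 - p) ^ G.degree i := by
    have hjensen := card_mul_rpow_le_sum_pow_degree G (b := 1 - p) (by linarith)
    rw [Fintype.card_fin] at hjensen
    exact (mul_le_mul_of_nonneg_left (rpow_neg_le_rpow_of_le_mul_logb (by linarith)
      (by linarith) hn0 hmean) hn0.le).trans hjensen
  have h32 : (n : ℝ) ^ ((3 : ℝ) / 2) = n * (n * (n : ℝ) ^ (-(1 / 2 : ℝ))) := by
    rw [← Real.rpow_one_add' hn0.le (by norm_num), ← Real.rpow_one_add' hn0.le (by norm_num)]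
    norm_num
  have hcoef : (n : ℝ) / 8 ≤ ((n - 1 : ℕ) : ℝ) / 2 := by
    rw [Nat.cast_sub (by omega), Nat.cast_one]
    linarith
  calc (n : ℝ) ^ ((3 : ℝ) / 2) / 8 = n / 8 * (n * (n : ℝ) ^ (-(1 / 2 : ℝ))) := by
        rw [h32]; ring
    _ ≤ ((n - 1 : ℕ) : ℝ) / 2 * ∑ i, (1 - p) ^ G.degree i := by
        gcongr
    _ ≤ graphExpect G p (fun H => (deficiency H : ℝ)) :=
        mul_sum_pow_degree_le_graphExpect_deficiency G ⟨hp0.le, hp1.le⟩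
end
end

section
/- Let n ≥ 2 be an integer, p ∈ (0,1), let L be a positive integer, and let G be the graph on [n] whose edges are all pairs i ≠ j with |i − j| ≤ L. Then for H ~ D(G,p), the expected number of pairs i < j with j − i ≤ L that have no straight path from i to j using at most 2 edges in H is at most n/p². -/
open Finset

attribute [local instance] Classical.propDecidable

noncomputable section

/-- The graph on `[n]` connecting all pairs `i ≠ j` with `|i - j| ≤ L`. -/
def intervalGraph (n L : ℕ) : SimpleGraph (Fin n) :=
  SimpleGraph.fromRel (fun i j => |(i : ℤ) - (j : ℤ)| ≤ (L : ℤ))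


-- ------------------------------------------------------------------
-- Auxiliary lemmas
-- ------------------------------------------------------------------
section Aux

set_option maxHeartbeats 1000000

variable {α : Type*} [DecidableEq α]

lemma sum_powerset_union_disj {A B : Finset α} (h : Disjoint A B) (F : Finset α → ℝ) :
    ∑ S ∈ (A ∪ B).powerset, F S = ∑ a ∈ A.powerset, ∑ b ∈ B.powerset, F (a ∪ b) := by
  rw [← Finset.sum_product']
  refine Finset.sum_nbij' (fun S => (S ∩ A, S ∩ B)) (fun x => x.1 ∪ x.2) ?_ ?_ ?_ ?_ ?_
  · intro S _
    simp [Finset.mem_product, Finset.inter_subset_right]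
  · intro x hx
    simp only [Finset.mem_product, Finset.mem_powerset] at hx
    exact Finset.mem_powerset.2 (Finset.union_subset_union hx.1 hx.2)
  · intro S hS
    simp only [Finset.mem_powerset] at hS
    dsimp only
    rw [← Finset.inter_union_distrib_left, Finset.inter_eq_left.2 hS]
  · intro x hx
    simp only [Finset.mem_product, Finset.mem_powerset] at hx
    have h1 : x.1 ∩ A = x.1 := Finset.inter_eq_left.2 hx.1
    have h2 : x.2 ∩ B = x.2 := Finset.inter_eq_left.2 hx.2
    have h3 : x.2 ∩ A = ∅ := Finset.eq_empty_of_forall_notMem fun e he => by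
      simp only [Finset.mem_inter] at he
      exact (Finset.disjoint_right.1 h (hx.2 he.1)) he.2
    have h4 : x.1 ∩ B = ∅ := Finset.eq_empty_of_forall_notMem fun e he => by
      simp only [Finset.mem_inter] at he
      exact (Finset.disjoint_left.1 h (hx.1 he.1)) he.2
    rw [Finset.union_inter_distrib_right, Finset.union_inter_distrib_right, h1, h2, h3, h4,
      Finset.union_empty, Finset.empty_union]
  · intro S hS
    simp only [Finset.mem_powerset] at hS
    dsimp only
    rw [← Finset.inter_union_distrib_left, Finset.inter_eq_left.2 hS]

lemma sum_weight_one (E : Finset α) (p : ℝ) :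
    ∑ S ∈ E.powerset, p ^ S.card * (1 - p) ^ (E.card - S.card) = 1 := by
  have h := Finset.prod_add (fun _ : α => p) (fun _ => 1 - p) E
  simp only [Finset.prod_const] at h
  have h1 : (p + (1 - p)) ^ E.card = 1 := by norm_num
  rw [h1] at h
  calc ∑ S ∈ E.powerset, p ^ S.card * (1 - p) ^ (E.card - S.card)
      = ∑ x ∈ E.powerset, p ^ x.card * (1 - p) ^ (E \ x).card :=
        Finset.sum_congr rfl fun t ht => by
          rw [Finset.card_sdiff_of_subset (Finset.mem_powerset.1 ht)]
    _ = 1 := h.symm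

lemma weight_nonneg {p : ℝ} (hp0 : 0 ≤ p) (hp1 : p ≤ 1) (a b : ℕ) :
    0 ≤ p ^ a * (1 - p) ^ b :=
  mul_nonneg (pow_nonneg hp0 _) (pow_nonneg (by linarith) _)

/-- `Finset.filter` with a fixed classical decidability instance. -/
noncomputable def pfilter (P : α → Prop) (s : Finset α) : Finset α :=
  @Finset.filter α P (fun a => Classical.propDecidable (P a)) s

lemma mem_pfilter {P : α → Prop} {s : Finset α} {x : α} :
    x ∈ pfilter P s ↔ x ∈ s ∧ P x := by
  rw [pfilter, Finset.mem_filter]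

lemma sum_pfilter (P : α → Prop) (s : Finset α) (f : α → ℝ) :
    ∑ x ∈ pfilter P s, f x
      = ∑ x ∈ s, @ite ℝ (P x) (Classical.propDecidable (P x)) (f x) 0 := by
  rw [pfilter, Finset.sum_filter]

lemma pfilter_congr {P R : α → Prop} (h : ∀ x, P x ↔ R x) (s : Finset α) :
    pfilter P s = pfilter R s := by
  ext x
  rw [mem_pfilter, mem_pfilter]
  exact and_congr_right fun _ => h x

lemma pfilter_subset_pfilter {P R : α → Prop} (h : ∀ x, P x → R x) (s : Finset α) :
    pfilter P s ⊆ pfilter R s := by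
  intro x hx
  rw [mem_pfilter] at hx ⊢
  exact ⟨hx.1, h x hx.2⟩

lemma sum_weight_marginal {E T : Finset α} (hTE : T ⊆ E) (p : ℝ)
    (P : Finset α → Prop)
    (hP : ∀ S, S ⊆ E → (P S ↔ P (S ∩ T))) :
    ∑ S ∈ pfilter P E.powerset, p ^ S.card * (1 - p) ^ (E.card - S.card)
      = ∑ s ∈ pfilter P T.powerset, p ^ s.card * (1 - p) ^ (T.card - s.card) := by
  have hE : T ∪ E \ T = E := Finset.union_sdiff_of_subset hTE
  have hdisj : Disjoint T (E \ T) := Finset.disjoint_sdiff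
  have hcard : T.card + (E \ T).card = E.card := by
    rw [← Finset.card_union_of_disjoint hdisj, hE]
  rw [sum_pfilter, ← hE,
    sum_powerset_union_disj hdisj (fun S => @ite ℝ (P S) (Classical.propDecidable (P S))
      (p ^ S.card * (1 - p) ^ ((T ∪ E \ T).card - S.card)) 0)]
  have key : ∀ a ∈ T.powerset, ∀ b ∈ (E \ T).powerset,
      (@ite ℝ (P (a ∪ b)) (Classical.propDecidable (P (a ∪ b)))
          (p ^ (a ∪ b).card * (1 - p) ^ ((T ∪ E \ T).card - (a ∪ b).card)) 0)
      = (@ite ℝ (P a) (Classical.propDecidable (P a))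
          (p ^ a.card * (1 - p) ^ (T.card - a.card)) 0)
        * (p ^ b.card * (1 - p) ^ ((E \ T).card - b.card)) := by
    intro a ha b hb
    rw [Finset.mem_powerset] at ha hb
    have hab : Disjoint a b := hdisj.mono ha hb
    have hbT : b ∩ T = ∅ := Finset.eq_empty_of_forall_notMem fun e he => by
      simp only [Finset.mem_inter] at he
      exact (Finset.disjoint_right.1 hdisj (hb he.1)) he.2
    have hPab : P (a ∪ b) ↔ P a := by
      rw [hP (a ∪ b) (by rw [← hE]; exact Finset.union_subset_union ha hb),
        Finset.union_inter_distrib_right, Finset.inter_eq_left.2 ha, hbT, Finset.union_empty]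
    have hcab : (a ∪ b).card = a.card + b.card := Finset.card_union_of_disjoint hab
    have h1 : a.card ≤ T.card := Finset.card_le_card ha
    have h2 : b.card ≤ (E \ T).card := Finset.card_le_card hb
    have hsplit : (T ∪ E \ T).card - (a.card + b.card)
        = (T.card - a.card) + ((E \ T).card - b.card) := by
      rw [hE]; omega
    by_cases hPa : P a
    · rw [if_pos (hPab.2 hPa), if_pos hPa, hcab, hsplit, pow_add, pow_add]; ring
    · rw [if_neg (fun h => hPa (hPab.1 h)), if_neg hPa, zero_mul]
  rw [Finset.sum_congr rfl fun a ha => Finset.sum_congr rfl fun b hb => key a ha b hb]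
  rw [Finset.sum_congr rfl fun a (ha : a ∈ T.powerset) => (Finset.mul_sum _ _ _).symm]
  rw [Finset.sum_congr rfl fun a (ha : a ∈ T.powerset) => by
    rw [sum_weight_one (E \ T) p, mul_one]]
  rw [← sum_pfilter]

lemma sum_weight_blocks {ι : Type*} [DecidableEq ι] (p : ℝ) (K : Finset ι) (T : ι → Finset α)
    (Q : ι → Finset α → Prop)
    (hdisj : ∀ i ∈ K, ∀ j ∈ K, i ≠ j → Disjoint (T i) (T j))
    (hQ : ∀ i ∈ K, ∀ s, (Q i s ↔ Q i (s ∩ T i))) :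
    ∑ S ∈ pfilter (fun S => ∀ i ∈ K, Q i S) (K.biUnion T).powerset,
        p ^ S.card * (1 - p) ^ ((K.biUnion T).card - S.card)
      = ∏ i ∈ K, ∑ s ∈ pfilter (Q i) (T i).powerset,
          p ^ s.card * (1 - p) ^ ((T i).card - s.card) := by
  induction K using Finset.induction_on with
  | empty =>
    have hp0 : pfilter (fun S => ∀ i ∈ (∅ : Finset ι), Q i S)
        ((∅ : Finset ι).biUnion T).powerset = {(∅ : Finset α)} := by
      ext s
      rw [mem_pfilter]
      simp [Finset.subset_empty]
    rw [hp0, Finset.sum_singleton, Finset.prod_empty]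
    simp
  | @insert a K' ha ih =>
    have hd : Disjoint (T a) (K'.biUnion T) := by
      rw [Finset.disjoint_biUnion_right]
      intro i hi
      exact hdisj a (Finset.mem_insert_self a K') i (Finset.mem_insert_of_mem hi)
        (fun h => ha (h ▸ hi))
    have key : ∀ u ∈ (T a).powerset, ∀ v ∈ (K'.biUnion T).powerset,
        (@ite ℝ (∀ i ∈ insert a K', Q i (u ∪ v))
            (Classical.propDecidable (∀ i ∈ insert a K', Q i (u ∪ v)))
            (p ^ (u ∪ v).card * (1 - p) ^ ((T a ∪ K'.biUnion T).card - (u ∪ v).card)) 0)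
        = (@ite ℝ (Q a u) (Classical.propDecidable (Q a u))
            (p ^ u.card * (1 - p) ^ ((T a).card - u.card)) 0)
          * (@ite ℝ (∀ i ∈ K', Q i v) (Classical.propDecidable (∀ i ∈ K', Q i v))
              (p ^ v.card * (1 - p) ^ ((K'.biUnion T).card - v.card)) 0) := by
      intro u hu v hv
      rw [Finset.mem_powerset] at hu hv
      have huv : Disjoint u v := hd.mono hu hv
      have hvTa : v ∩ T a = ∅ := Finset.eq_empty_of_forall_notMem fun e he => by
        simp only [Finset.mem_inter] at he
        exact (Finset.disjoint_right.1 hd (hv he.1)) he.2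
      have hQa : Q a (u ∪ v) ↔ Q a u := by
        rw [hQ a (Finset.mem_insert_self a K') (u ∪ v), Finset.union_inter_distrib_right,
          Finset.inter_eq_left.2 hu, hvTa, Finset.union_empty]
      have hQi : ∀ i ∈ K', (Q i (u ∪ v) ↔ Q i v) := by
        intro i hi
        have hia : i ≠ a := fun h => ha (h ▸ hi)
        have hdi : Disjoint (T a) (T i) := hdisj a (Finset.mem_insert_self a K') i
          (Finset.mem_insert_of_mem hi) hia.symm
        have huTi : u ∩ T i = ∅ := Finset.eq_empty_of_forall_notMem fun e he => by
          simp only [Finset.mem_inter] at he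
          exact (Finset.disjoint_left.1 hdi (hu he.1)) he.2
        rw [hQ i (Finset.mem_insert_of_mem hi) (u ∪ v), Finset.union_inter_distrib_right,
          huTi, Finset.empty_union, ← hQ i (Finset.mem_insert_of_mem hi) v]
      have hcond : (∀ i ∈ insert a K', Q i (u ∪ v)) ↔ (Q a u ∧ ∀ i ∈ K', Q i v) := by
        rw [Finset.forall_mem_insert, hQa]
        exact and_congr_right fun _ => forall₂_congr hQi
      have hcuv : (u ∪ v).card = u.card + v.card := Finset.card_union_of_disjoint huv
      have h1 : u.card ≤ (T a).card := Finset.card_le_card hu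
      have h2 : v.card ≤ (K'.biUnion T).card := Finset.card_le_card hv
      have hsplit : (T a ∪ K'.biUnion T).card - (u.card + v.card)
          = ((T a).card - u.card) + ((K'.biUnion T).card - v.card) := by
        rw [Finset.card_union_of_disjoint hd]; omega
      by_cases hc : ∀ i ∈ insert a K', Q i (u ∪ v)
      · obtain ⟨hc1, hc2⟩ := hcond.1 hc
        rw [if_pos hc, if_pos hc1, if_pos hc2, hcuv, hsplit, pow_add, pow_add]; ring
      · rw [if_neg hc]
        rcases not_and_or.1 (fun h => hc (hcond.2 h)) with h | h
        · rw [if_neg h, zero_mul]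
        · rw [if_neg h, mul_zero]
    calc ∑ S ∈ pfilter (fun S => ∀ i ∈ insert a K', Q i S)
            ((insert a K').biUnion T).powerset,
          p ^ S.card * (1 - p) ^ (((insert a K').biUnion T).card - S.card)
        = ∑ S ∈ (T a ∪ K'.biUnion T).powerset,
            @ite ℝ (∀ i ∈ insert a K', Q i S)
              (Classical.propDecidable (∀ i ∈ insert a K', Q i S))
              (p ^ S.card * (1 - p) ^ ((T a ∪ K'.biUnion T).card - S.card)) 0 := by
          rw [Finset.biUnion_insert]
          exact sum_pfilter _ _ _
      _ = ∑ u ∈ (T a).powerset, ∑ v ∈ (K'.biUnion T).powerset,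
            @ite ℝ (∀ i ∈ insert a K', Q i (u ∪ v))
              (Classical.propDecidable (∀ i ∈ insert a K', Q i (u ∪ v)))
              (p ^ (u ∪ v).card * (1 - p) ^ ((T a ∪ K'.biUnion T).card - (u ∪ v).card)) 0 :=
          sum_powerset_union_disj hd _
      _ = ∑ u ∈ (T a).powerset, ∑ v ∈ (K'.biUnion T).powerset,
            (@ite ℝ (Q a u) (Classical.propDecidable (Q a u))
              (p ^ u.card * (1 - p) ^ ((T a).card - u.card)) 0)
            * (@ite ℝ (∀ i ∈ K', Q i v) (Classical.propDecidable (∀ i ∈ K', Q i v))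
                (p ^ v.card * (1 - p) ^ ((K'.biUnion T).card - v.card)) 0) :=
          Finset.sum_congr rfl fun u hu => Finset.sum_congr rfl fun v hv => key u hu v hv
      _ = (∑ u ∈ (T a).powerset, @ite ℝ (Q a u) (Classical.propDecidable (Q a u))
              (p ^ u.card * (1 - p) ^ ((T a).card - u.card)) 0)
          * (∑ v ∈ (K'.biUnion T).powerset,
              @ite ℝ (∀ i ∈ K', Q i v) (Classical.propDecidable (∀ i ∈ K', Q i v))
                (p ^ v.card * (1 - p) ^ ((K'.biUnion T).card - v.card)) 0) :=
          (Finset.sum_mul_sum _ _ _ _).symm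
      _ = (∑ u ∈ pfilter (Q a) (T a).powerset,
              p ^ u.card * (1 - p) ^ ((T a).card - u.card))
          * (∑ v ∈ pfilter (fun v => ∀ i ∈ K', Q i v) (K'.biUnion T).powerset,
              p ^ v.card * (1 - p) ^ ((K'.biUnion T).card - v.card)) := by
          rw [sum_pfilter, sum_pfilter]
      _ = ∏ i ∈ insert a K', ∑ s ∈ pfilter (Q i) (T i).powerset,
            p ^ s.card * (1 - p) ^ ((T i).card - s.card) := by
          rw [Finset.prod_insert ha,
            ih (fun i hi j hj hij => hdisj i (Finset.mem_insert_of_mem hi) j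
              (Finset.mem_insert_of_mem hj) hij)
            (fun i hi s => hQ i (Finset.mem_insert_of_mem hi) s)]

lemma block_single (e : α) (p : ℝ) :
    ∑ s ∈ pfilter (fun s => e ∉ s) ({e} : Finset α).powerset,
      p ^ s.card * (1 - p) ^ (({e} : Finset α).card - s.card) = 1 - p := by
  have hf : pfilter (fun s => e ∉ s) ({e} : Finset α).powerset = {(∅ : Finset α)} := by
    ext s
    rw [mem_pfilter]
    simp only [Finset.mem_powerset, Finset.subset_singleton_iff, Finset.mem_singleton]
    constructor
    · rintro ⟨rfl | rfl, h2⟩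
      · rfl
      · exact absurd (Finset.mem_singleton_self e) h2
    · rintro rfl
      simp
  rw [hf, Finset.sum_singleton]
  simp

lemma block_pair (a b : α) (hab : a ≠ b) (p : ℝ) :
    ∑ s ∈ pfilter (fun s => ¬ (a ∈ s ∧ b ∈ s)) ({a, b} : Finset α).powerset,
      p ^ s.card * (1 - p) ^ (({a, b} : Finset α).card - s.card) = 1 - p ^ 2 := by
  have hf : pfilter (fun s => ¬ (a ∈ s ∧ b ∈ s)) ({a, b} : Finset α).powerset
      = {(∅ : Finset α), {a}, {b}} := by
    ext s
    rw [mem_pfilter]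
    simp only [Finset.mem_powerset, Finset.mem_insert, Finset.mem_singleton]
    constructor
    · rintro ⟨h1, h2⟩
      by_cases ha : a ∈ s <;> by_cases hb : b ∈ s
      · exact absurd ⟨ha, hb⟩ h2
      · refine Or.inr (Or.inl ?_)
        refine Finset.Subset.antisymm ?_ ?_
        · intro x hx
          rcases Finset.mem_insert.1 (h1 hx) with h | h
          · rw [h]; exact Finset.mem_singleton_self a
          · exact absurd ((Finset.mem_singleton.1 h) ▸ hx) hb
        · intro x hx
          rw [Finset.mem_singleton.1 hx]; exact ha
      · refine Or.inr (Or.inr ?_)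
        refine Finset.Subset.antisymm ?_ ?_
        · intro x hx
          rcases Finset.mem_insert.1 (h1 hx) with h | h
          · exact absurd (h ▸ hx) ha
          · rw [Finset.mem_singleton.1 h]; exact Finset.mem_singleton_self b
        · intro x hx
          rw [Finset.mem_singleton.1 hx]; exact hb
      · refine Or.inl (Finset.eq_empty_of_forall_notMem fun x hx => ?_)
        rcases Finset.mem_insert.1 (h1 hx) with h | h
        · exact ha (h ▸ hx)
        · exact hb ((Finset.mem_singleton.1 h) ▸ hx)
    · rintro (rfl | rfl | rfl)
      · simp
      · constructor
        · intro x hx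
          rw [Finset.mem_singleton.1 hx]
          exact Finset.mem_insert_self a {b}
        · rintro ⟨-, hb'⟩
          exact hab (Finset.mem_singleton.1 hb').symm
      · constructor
        · intro x hx
          rw [Finset.mem_singleton.1 hx]
          exact Finset.mem_insert_of_mem (Finset.mem_singleton_self b)
        · rintro ⟨ha', -⟩
          exact hab (Finset.mem_singleton.1 ha')
  rw [hf]
  have h1 : (∅ : Finset α) ∉ ({({a} : Finset α), {b}} : Finset (Finset α)) := by
    simp only [Finset.mem_insert, Finset.mem_singleton]
    push_neg
    constructor <;> intro h <;> exact absurd h.symm (Finset.singleton_ne_empty _)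
  have h2 : ({a} : Finset α) ∉ ({({b} : Finset α)} : Finset (Finset α)) := by
    simp only [Finset.mem_singleton, Finset.singleton_inj]
    exact hab
  rw [Finset.sum_insert h1, Finset.sum_insert h2, Finset.sum_singleton, Finset.card_pair hab]
  simp only [Finset.card_empty, Finset.card_singleton, pow_zero, one_mul, pow_one]
  ring

lemma sym2_eq_elim {n : ℕ} {a b c d : Fin n} (h : s(a, b) = s(c, d)) :
    ((a : ℕ) = c ∧ (b : ℕ) = d) ∨ ((a : ℕ) = d ∧ (b : ℕ) = c) := by
  rcases Sym2.eq_iff.1 h with ⟨h1, h2⟩ | ⟨h1, h2⟩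
  · exact Or.inl ⟨congrArg Fin.val h1, congrArg Fin.val h2⟩
  · exact Or.inr ⟨congrArg Fin.val h1, congrArg Fin.val h2⟩

lemma intervalGraph_edge_mem {n L : ℕ} {i j : Fin n} (hij : i < j) (h : (j : ℕ) - (i : ℕ) ≤ L) :
    s(i, j) ∈ (intervalGraph n L).edgeSet := by
  rw [SimpleGraph.mem_edgeSet, intervalGraph, SimpleGraph.fromRel_adj]
  refine ⟨Fin.ne_of_lt hij, Or.inl ?_⟩
  rw [abs_le]
  have := Fin.lt_def.1 hij
  omega

lemma hop_of_direct {n : ℕ} {i j : Fin n} (hij : i < j) (S : Set (Sym2 (Fin n)))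
    (h : s(i, j) ∈ S) : HasStraightPathHop (SimpleGraph.fromEdgeSet S) i j 2 := by
  refine ⟨1, ![i, j], by norm_num, ?_, ?_, ?_, ?_⟩
  · simp
  · simp [Fin.last]
  · rw [Fin.strictMono_iff_lt_succ]
    intro t
    fin_cases t
    simpa using hij
  · intro t
    fin_cases t
    simpa [SimpleGraph.fromEdgeSet_adj, Fin.ne_of_lt hij] using h

lemma hop_of_two {n : ℕ} {i k j : Fin n} (hik : i < k) (hkj : k < j) (S : Set (Sym2 (Fin n)))
    (h1 : s(i, k) ∈ S) (h2 : s(k, j) ∈ S) :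
    HasStraightPathHop (SimpleGraph.fromEdgeSet S) i j 2 := by
  refine ⟨2, ![i, k, j], le_refl 2, ?_, ?_, ?_, ?_⟩
  · simp
  · simp [Fin.last]
  · rw [Fin.strictMono_iff_lt_succ]
    intro t
    fin_cases t
    · simpa using hik
    · simpa using hkj
  · intro t
    fin_cases t
    · simpa [SimpleGraph.fromEdgeSet_adj, Fin.ne_of_lt hik] using h1
    · simpa [SimpleGraph.fromEdgeSet_adj, Fin.ne_of_lt hkj] using h2

lemma pair_bound {n L : ℕ} (p : ℝ) (hp0 : 0 < p) (hp1 : p < 1)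
    (E : Finset (Sym2 (Fin n)))
    (hedge : ∀ a b : Fin n, a < b → (b : ℕ) - (a : ℕ) ≤ L → s(a, b) ∈ E)
    (i j : Fin n) (hij : i < j) (hd : (j : ℕ) - (i : ℕ) ≤ L) :
    ∑ S ∈ pfilter (fun S => ¬ HasStraightPathHop
          (SimpleGraph.fromEdgeSet ((S : Finset (Sym2 (Fin n))) : Set (Sym2 (Fin n)))) i j 2)
        E.powerset,
      p ^ S.card * (1 - p) ^ (E.card - S.card)
      ≤ (1 - p) * (1 - p ^ 2) ^ ((j : ℕ) - (i : ℕ) - 1) := by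
  have hijv : (i : ℕ) < (j : ℕ) := Fin.lt_def.1 hij
  set K := Finset.Ioc i j with hK
  set T : Fin n → Finset (Sym2 (Fin n)) :=
    fun k => if k = j then {s(i, j)} else {s(i, k), s(k, j)} with hT
  set Q : Fin n → Finset (Sym2 (Fin n)) → Prop := fun k S =>
    if k = j then s(i, j) ∉ S else ¬ (s(i, k) ∈ S ∧ s(k, j) ∈ S) with hQ
  have hTE : ∀ k ∈ K, T k ⊆ E := by
    intro k hk
    rw [hK, Finset.mem_Ioc] at hk
    have hik : (i : ℕ) < (k : ℕ) := Fin.lt_def.1 hk.1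
    have hkj : (k : ℕ) ≤ (j : ℕ) := Fin.le_def.1 hk.2
    by_cases h : k = j
    · rw [hT]; simp only [if_pos h]
      exact Finset.singleton_subset_iff.2 (hedge i j hij hd)
    · have hkjv : (k : ℕ) < (j : ℕ) := lt_of_le_of_ne hkj (fun hv => h (Fin.ext hv))
      rw [hT]; simp only [if_neg h]
      refine Finset.insert_subset ?_ (Finset.singleton_subset_iff.2 ?_)
      · exact hedge i k hk.1 (by omega)
      · exact hedge k j (Fin.lt_def.2 hkjv) (by omega)
  have hBUE : K.biUnion T ⊆ E := Finset.biUnion_subset.2 hTE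
  have hdisj : ∀ k ∈ K, ∀ k' ∈ K, k ≠ k' → Disjoint (T k) (T k') := by
    intro k hk k' hk' hne
    rw [hK, Finset.mem_Ioc] at hk hk'
    have hik : (i : ℕ) < (k : ℕ) := Fin.lt_def.1 hk.1
    have hkj : (k : ℕ) ≤ (j : ℕ) := Fin.le_def.1 hk.2
    have hik' : (i : ℕ) < (k' : ℕ) := Fin.lt_def.1 hk'.1
    have hkj' : (k' : ℕ) ≤ (j : ℕ) := Fin.le_def.1 hk'.2
    have hnev : (k : ℕ) ≠ (k' : ℕ) := fun hv => hne (Fin.ext hv)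
    rw [Finset.disjoint_left]
    intro e he he'
    by_cases h1 : k = j <;> by_cases h2 : k' = j
    · exact hne (h1.trans h2.symm)
    · rw [hT] at he he'
      simp only [if_pos h1, if_neg h2, Finset.mem_singleton, Finset.mem_insert] at he he'
      subst he
      have hkjv' : (k' : ℕ) < (j : ℕ) := lt_of_le_of_ne hkj' (fun hv => h2 (Fin.ext hv))
      rcases he' with he' | he' <;> rcases sym2_eq_elim he' with ⟨e1, e2⟩ | ⟨e1, e2⟩ <;> omega
    · rw [hT] at he he'
      simp only [if_neg h1, if_pos h2, Finset.mem_singleton, Finset.mem_insert] at he he'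
      subst he'
      have hkjv : (k : ℕ) < (j : ℕ) := lt_of_le_of_ne hkj (fun hv => h1 (Fin.ext hv))
      rcases he with he | he <;> rcases sym2_eq_elim he with ⟨e1, e2⟩ | ⟨e1, e2⟩ <;> omega
    · rw [hT] at he he'
      simp only [if_neg h1, if_neg h2, Finset.mem_insert, Finset.mem_singleton] at he he'
      have hkjv : (k : ℕ) < (j : ℕ) := lt_of_le_of_ne hkj (fun hv => h1 (Fin.ext hv))
      have hkjv' : (k' : ℕ) < (j : ℕ) := lt_of_le_of_ne hkj' (fun hv => h2 (Fin.ext hv))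
      rcases he with rfl | rfl <;> rcases he' with he' | he' <;>
        rcases sym2_eq_elim he' with ⟨e1, e2⟩ | ⟨e1, e2⟩ <;> omega
  have hQiff : ∀ k ∈ K, ∀ s, (Q k s ↔ Q k (s ∩ T k)) := by
    intro k hk s
    by_cases h : k = j
    · rw [hQ, hT]
      simp only [if_pos h, Finset.mem_inter, Finset.mem_singleton]
      tauto
    · rw [hQ, hT]
      simp only [if_neg h, Finset.mem_inter, Finset.mem_insert, Finset.mem_singleton]
      tauto
  have himp : ∀ S, (¬ HasStraightPathHop
      (SimpleGraph.fromEdgeSet ((S : Finset (Sym2 (Fin n))) : Set (Sym2 (Fin n)))) i j 2) →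
      ∀ k ∈ K, Q k S := by
    intro S hnot k hk
    rw [hK, Finset.mem_Ioc] at hk
    by_cases h : k = j
    · rw [hQ]; simp only [if_pos h]
      intro hmem
      exact hnot (hop_of_direct hij _ (Finset.mem_coe.2 hmem))
    · rw [hQ]; simp only [if_neg h]
      rintro ⟨hm1, hm2⟩
      have hkjv : k < j := lt_of_le_of_ne hk.2 h
      exact hnot (hop_of_two hk.1 hkjv _ (Finset.mem_coe.2 hm1) (Finset.mem_coe.2 hm2))
  -- enlarge the event
  have step1 : ∑ S ∈ pfilter (fun S => ¬ HasStraightPathHop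
          (SimpleGraph.fromEdgeSet ((S : Finset (Sym2 (Fin n))) : Set (Sym2 (Fin n)))) i j 2)
        E.powerset,
        p ^ S.card * (1 - p) ^ (E.card - S.card)
      ≤ ∑ S ∈ pfilter (fun S => ∀ k ∈ K, Q k S) E.powerset,
        p ^ S.card * (1 - p) ^ (E.card - S.card) := by
    refine Finset.sum_le_sum_of_subset_of_nonneg
      (pfilter_subset_pfilter (fun S hS => himp S hS) _) ?_
    intro S _ _
    exact weight_nonneg hp0.le hp1.le _ _
  refine step1.trans ?_
  -- marginalize and factor
  have step2 : ∑ S ∈ pfilter (fun S => ∀ k ∈ K, Q k S) E.powerset,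
        p ^ S.card * (1 - p) ^ (E.card - S.card)
      = ∑ S ∈ pfilter (fun S => ∀ k ∈ K, Q k S) (K.biUnion T).powerset,
        p ^ S.card * (1 - p) ^ ((K.biUnion T).card - S.card) := by
    refine sum_weight_marginal hBUE p (fun S => ∀ k ∈ K, Q k S) ?_
    intro S _
    have hint : ∀ k ∈ K, S ∩ K.biUnion T ∩ T k = S ∩ T k := by
      intro k hk
      rw [Finset.inter_assoc,
        Finset.inter_eq_right.2 (Finset.subset_biUnion_of_mem T hk)]
    constructor
    · intro h k hk
      rw [hQiff k hk, hint k hk, ← hQiff k hk]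
      exact h k hk
    · intro h k hk
      have hh := h k hk
      rw [hQiff k hk, hint k hk] at hh
      rwa [hQiff k hk]
  -- evaluate the blocks
  have hblock : ∀ k ∈ K, ∑ s ∈ pfilter (Q k) (T k).powerset,
      p ^ s.card * (1 - p) ^ ((T k).card - s.card)
      = if k = j then 1 - p else 1 - p ^ 2 := by
    intro k hk
    rw [hK, Finset.mem_Ioc] at hk
    have hik : (i : ℕ) < (k : ℕ) := Fin.lt_def.1 hk.1
    have hkj : (k : ℕ) ≤ (j : ℕ) := Fin.le_def.1 hk.2
    by_cases h : k = j
    · have hTk : T k = {s(i, j)} := by rw [hT]; simp only [if_pos h]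
      have hQk : ∀ s, Q k s ↔ s(i, j) ∉ s := by
        intro s; rw [hQ]; simp only [if_pos h]
      rw [if_pos h, hTk, pfilter_congr hQk]
      exact block_single _ p
    · have hTk : T k = {s(i, k), s(k, j)} := by rw [hT]; simp only [if_neg h]
      have hQk : ∀ s, Q k s ↔ ¬ (s(i, k) ∈ s ∧ s(k, j) ∈ s) := by
        intro s; rw [hQ]; simp only [if_neg h]
      have hkjv : (k : ℕ) < (j : ℕ) := lt_of_le_of_ne hkj (fun hv => h (Fin.ext hv))
      rw [if_neg h, hTk, pfilter_congr hQk]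
      refine block_pair _ _ ?_ p
      intro heq
      rcases sym2_eq_elim heq with ⟨e1, e2⟩ | ⟨e1, e2⟩ <;> omega
  have step4 : (∏ k ∈ K, ∑ s ∈ pfilter (Q k) (T k).powerset,
      p ^ s.card * (1 - p) ^ ((T k).card - s.card))
      = (1 - p) * (1 - p ^ 2) ^ ((j : ℕ) - (i : ℕ) - 1) := by
    rw [Finset.prod_congr rfl hblock]
    have hins : K = insert j (Finset.Ioo i j) := (Finset.Ioo_insert_right hij).symm
    rw [hins, Finset.prod_insert (by simp), if_pos rfl]
    have heach : ∀ k ∈ Finset.Ioo i j, (if k = j then 1 - p else 1 - p ^ 2) = 1 - p ^ 2 := by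
      intro k hk
      rw [Finset.mem_Ioo] at hk
      exact if_neg (fun h => absurd (h ▸ hk.2) (lt_irrefl j))
    rw [Finset.prod_congr rfl heach, Finset.prod_const, Fin.card_Ioo]
  calc ∑ S ∈ pfilter (fun S => ∀ k ∈ K, Q k S) E.powerset,
        p ^ S.card * (1 - p) ^ (E.card - S.card)
      = ∏ k ∈ K, ∑ s ∈ pfilter (Q k) (T k).powerset,
          p ^ s.card * (1 - p) ^ ((T k).card - s.card) :=
        step2.trans (sum_weight_blocks p K T Q hdisj hQiff)
    _ = (1 - p) * (1 - p ^ 2) ^ ((j : ℕ) - (i : ℕ) - 1) := step4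
    _ ≤ (1 - p) * (1 - p ^ 2) ^ ((j : ℕ) - (i : ℕ) - 1) := le_refl _

lemma inner_bound {n : ℕ} (L : ℕ) (p : ℝ) (hp0 : 0 < p) (hp1 : p < 1) (i : Fin n) :
    ∑ j : Fin n, (if i < j ∧ (j : ℕ) - (i : ℕ) ≤ L
        then (1 - p) * (1 - p ^ 2) ^ ((j : ℕ) - (i : ℕ) - 1) else 0)
      ≤ 1 / p ^ 2 := by
  have hx0 : (0 : ℝ) ≤ 1 - p ^ 2 := by nlinarith
  have hx1 : 1 - p ^ 2 < 1 := by nlinarith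
  have hterm : ∀ j : Fin n,
      (if i < j ∧ (j : ℕ) - (i : ℕ) ≤ L
        then (1 - p) * (1 - p ^ 2) ^ ((j : ℕ) - (i : ℕ) - 1) else 0)
      ≤ (if i < j then (1 - p) * (1 - p ^ 2) ^ ((j : ℕ) - (i : ℕ) - 1) else 0) := by
    intro j
    by_cases h : i < j ∧ (j : ℕ) - (i : ℕ) ≤ L
    · rw [if_pos h, if_pos h.1]
    · rw [if_neg h]
      by_cases h2 : i < j
      · rw [if_pos h2]
        exact mul_nonneg (by linarith) (pow_nonneg hx0 _)
      · rw [if_neg h2]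
  refine (Finset.sum_le_sum fun j _ => hterm j).trans ?_
  rw [← Finset.sum_filter]
  have hinj : ∀ x ∈ Finset.univ.filter (fun j : Fin n => i < j),
      ∀ y ∈ Finset.univ.filter (fun j : Fin n => i < j),
      (x : ℕ) - (i : ℕ) - 1 = (y : ℕ) - (i : ℕ) - 1 → x = y := by
    intro x hx y hy hxy
    rw [Finset.mem_filter] at hx hy
    have hx1 := Fin.lt_def.1 hx.2
    have hy1 := Fin.lt_def.1 hy.2
    exact Fin.ext (by omega)
  have himg := Finset.sum_image (f := fun t : ℕ => (1 - p) * (1 - p ^ 2) ^ t) hinj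
  rw [← himg]
  have hsub : (Finset.univ.filter (fun j : Fin n => i < j)).image
      (fun j : Fin n => (j : ℕ) - (i : ℕ) - 1) ⊆ Finset.range n := by
    intro t ht
    rw [Finset.mem_image] at ht
    obtain ⟨j, _, rfl⟩ := ht
    rw [Finset.mem_range]
    have := j.isLt
    omega
  refine (Finset.sum_le_sum_of_subset_of_nonneg hsub ?_).trans ?_
  · intro t _ _
    exact mul_nonneg (by linarith) (pow_nonneg hx0 _)
  rw [← Finset.mul_sum]
  have hp2 : (0 : ℝ) < p ^ 2 := by positivity
  have hsum_nonneg : (0 : ℝ) ≤ ∑ t ∈ Finset.range n, (1 - p ^ 2) ^ t :=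
    Finset.sum_nonneg fun t _ => pow_nonneg hx0 _
  have hgeom : ∑ t ∈ Finset.range n, (1 - p ^ 2) ^ t ≤ 1 / p ^ 2 := by
    have hne : (1 - p ^ 2) ≠ 1 := by nlinarith
    rw [geom_sum_eq hne]
    rw [show (1 - p ^ 2 - 1) = -(p ^ 2) by ring, div_neg, ← neg_div, neg_sub]
    refine (div_le_div_iff_of_pos_right hp2).2 ?_
    nlinarith [pow_nonneg hx0 n]
  calc (1 - p) * ∑ t ∈ Finset.range n, (1 - p ^ 2) ^ t
      ≤ 1 * (1 / p ^ 2) := by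
        refine mul_le_mul (by linarith) hgeom hsum_nonneg (by norm_num)
    _ = 1 / p ^ 2 := one_mul _

end Aux


theorem stmt_10 (n : ℕ) (hn : 2 ≤ n) (p : ℝ) (hp : p ∈ Set.Ioo (0 : ℝ) 1)
    (L : ℕ) (hL : 0 < L) :
    graphExpect (intervalGraph n L) p (fun H =>
        ((Finset.univ.filter fun pq : Fin n × Fin n =>
          pq.1 < pq.2 ∧ (pq.2 : ℕ) - (pq.1 : ℕ) ≤ L ∧
            ¬ HasStraightPathHop H pq.1 pq.2 2).card : ℝ)) ≤
      (n : ℝ) / p ^ 2 := by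
  obtain ⟨hp0, hp1⟩ := hp
  simp only [graphExpect]
  generalize hEF : (intervalGraph n L).edgeFinset = E
  have hedge : ∀ a b : Fin n, a < b → (b : ℕ) - (a : ℕ) ≤ L → s(a, b) ∈ E := by
    intro a b h1 h2
    rw [← hEF, SimpleGraph.mem_edgeFinset]
    exact intervalGraph_edge_mem h1 h2
  have key : ∀ S ∈ E.powerset,
      p ^ S.card * (1 - p) ^ (E.card - S.card) *
        ((Finset.univ.filter fun pq : Fin n × Fin n =>
          pq.1 < pq.2 ∧ (pq.2 : ℕ) - (pq.1 : ℕ) ≤ L ∧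
            ¬ HasStraightPathHop
              (SimpleGraph.fromEdgeSet ((S : Finset (Sym2 (Fin n))) : Set (Sym2 (Fin n))))
              pq.1 pq.2 2).card : ℝ)
      = ∑ pq ∈ (Finset.univ : Finset (Fin n × Fin n)),
          (if pq.1 < pq.2 ∧ (pq.2 : ℕ) - (pq.1 : ℕ) ≤ L ∧
            ¬ HasStraightPathHop
              (SimpleGraph.fromEdgeSet ((S : Finset (Sym2 (Fin n))) : Set (Sym2 (Fin n))))
              pq.1 pq.2 2
          then p ^ S.card * (1 - p) ^ (E.card - S.card) else 0) := by
    intro S _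
    rw [Finset.card_filter]
    push_cast
    rw [Finset.mul_sum]
    refine Finset.sum_congr rfl fun pq _ => ?_
    by_cases h : pq.1 < pq.2 ∧ (pq.2 : ℕ) - (pq.1 : ℕ) ≤ L ∧
        ¬ HasStraightPathHop
          (SimpleGraph.fromEdgeSet ((S : Finset (Sym2 (Fin n))) : Set (Sym2 (Fin n))))
          pq.1 pq.2 2
    · rw [if_pos h, if_pos h, mul_one]
    · rw [if_neg h, if_neg h, mul_zero]
  rw [Finset.sum_congr rfl key, Finset.sum_comm]
  have hpq : ∀ pq ∈ (Finset.univ : Finset (Fin n × Fin n)),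
      (∑ S ∈ E.powerset,
        (if pq.1 < pq.2 ∧ (pq.2 : ℕ) - (pq.1 : ℕ) ≤ L ∧
            ¬ HasStraightPathHop
              (SimpleGraph.fromEdgeSet ((S : Finset (Sym2 (Fin n))) : Set (Sym2 (Fin n))))
              pq.1 pq.2 2
          then p ^ S.card * (1 - p) ^ (E.card - S.card) else 0))
      ≤ (if pq.1 < pq.2 ∧ (pq.2 : ℕ) - (pq.1 : ℕ) ≤ L
          then (1 - p) * (1 - p ^ 2) ^ ((pq.2 : ℕ) - (pq.1 : ℕ) - 1) else 0) := by
    intro pq _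
    by_cases hdet : pq.1 < pq.2 ∧ (pq.2 : ℕ) - (pq.1 : ℕ) ≤ L
    · rw [if_pos hdet]
      have hconv : ∀ S ∈ E.powerset,
          (if pq.1 < pq.2 ∧ (pq.2 : ℕ) - (pq.1 : ℕ) ≤ L ∧
              ¬ HasStraightPathHop
                (SimpleGraph.fromEdgeSet ((S : Finset (Sym2 (Fin n))) : Set (Sym2 (Fin n))))
                pq.1 pq.2 2
            then p ^ S.card * (1 - p) ^ (E.card - S.card) else 0)
          = (@ite ℝ (¬ HasStraightPathHop
                (SimpleGraph.fromEdgeSet ((S : Finset (Sym2 (Fin n))) : Set (Sym2 (Fin n))))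
                pq.1 pq.2 2)
              (Classical.propDecidable _)
              (p ^ S.card * (1 - p) ^ (E.card - S.card)) 0) := by
        intro S _
        by_cases hh : ¬ HasStraightPathHop
            (SimpleGraph.fromEdgeSet ((S : Finset (Sym2 (Fin n))) : Set (Sym2 (Fin n))))
            pq.1 pq.2 2
        · rw [if_pos ⟨hdet.1, hdet.2, hh⟩, if_pos hh]
        · rw [if_neg (fun hc => hh hc.2.2), if_neg hh]
      rw [Finset.sum_congr rfl hconv]
      calc ∑ S ∈ E.powerset,
            (@ite ℝ (¬ HasStraightPathHop
                (SimpleGraph.fromEdgeSet ((S : Finset (Sym2 (Fin n))) : Set (Sym2 (Fin n))))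
                pq.1 pq.2 2)
              (Classical.propDecidable _)
              (p ^ S.card * (1 - p) ^ (E.card - S.card)) 0)
          = ∑ S ∈ pfilter (fun S => ¬ HasStraightPathHop
                (SimpleGraph.fromEdgeSet ((S : Finset (Sym2 (Fin n))) : Set (Sym2 (Fin n))))
                pq.1 pq.2 2) E.powerset,
              p ^ S.card * (1 - p) ^ (E.card - S.card) := (sum_pfilter _ _ _).symm
        _ ≤ (1 - p) * (1 - p ^ 2) ^ ((pq.2 : ℕ) - (pq.1 : ℕ) - 1) :=
            pair_bound p hp0 hp1 E hedge pq.1 pq.2 hdet.1 hdet.2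
    · rw [if_neg hdet]
      have hzero : ∀ S ∈ E.powerset,
          (if pq.1 < pq.2 ∧ (pq.2 : ℕ) - (pq.1 : ℕ) ≤ L ∧
              ¬ HasStraightPathHop
                (SimpleGraph.fromEdgeSet ((S : Finset (Sym2 (Fin n))) : Set (Sym2 (Fin n))))
                pq.1 pq.2 2
            then p ^ S.card * (1 - p) ^ (E.card - S.card) else 0) = 0 := by
        intro S _
        exact if_neg (fun hc => hdet ⟨hc.1, hc.2.1⟩)
      rw [Finset.sum_congr rfl hzero, Finset.sum_const, smul_zero]
  refine (Finset.sum_le_sum hpq).trans ?_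
  rw [Fintype.sum_prod_type]
  refine (Finset.sum_le_sum (fun i (_ : i ∈ Finset.univ) =>
    inner_bound L p hp0 hp1 i)).trans ?_
  rw [Finset.sum_const, Finset.card_univ, Fintype.card_fin, nsmul_eq_mul, mul_one_div]
end
end

section
/- There is a constant C > 0 such that for every integer n ≥ 2 there exists a graph G on [n] with at most C·n·log n edges such that for every pair 1 ≤ i < j ≤ n there is a straight path from i to j in G using at most 2 edges (i.e., G is a 2-hop exact spanner of [n]). -/
open Finset

attribute [local instance] Classical.propDecidable

noncomputable section

/-! Two integers `a < b` first fall into consecutive dyadic blocks of some length `2^k`, and then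
`m = (b / 2^k) * 2^k` satisfies `a < m ≤ b` and is a dyadic rounding of both: up from `a`, down
from `b`. Joining every `x < n` to its roundings up and down to multiples of `2^k`, for
`k ≤ log₂ n`, thus gives a `2`-hop spanner with at most `2 n (log₂ n + 1)` edges. -/

namespace HasStraightPathHop

variable {n : ℕ} {H : SimpleGraph (Fin n)} {i m j : Fin n} {k : ℕ}

lemma of_adj (hij : i < j) (h : H.Adj i j) (hk : 1 ≤ k) : HasStraightPathHop H i j k :=
  ⟨1, ![i, j], hk, rfl, rfl, Fin.strictMono_iff_lt_succ.2 fun t => by fin_cases t; exact hij,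
    fun t => by fin_cases t; exact h⟩

lemma of_adj_adj (him : i < m) (hmj : m < j) (him' : H.Adj i m) (hmj' : H.Adj m j)
    (hk : 2 ≤ k) : HasStraightPathHop H i j k :=
  ⟨2, ![i, m, j], hk, rfl, rfl,
    Fin.strictMono_iff_lt_succ.2 fun t => by fin_cases t; exacts [him, hmj],
    fun t => by fin_cases t; exacts [him', hmj']⟩

end HasStraightPathHop

lemma SimpleGraph.card_edgeFinset_le_sum_card_filter {V : Type*} [Fintype V] [DecidableEq V]
    (G : SimpleGraph V) [Fintype G.edgeSet] (r : V → V → Prop) [DecidableRel r]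
    (hr : ∀ a b, G.Adj a b → r a b ∨ r b a) :
    #G.edgeFinset ≤ ∑ a, #{b | r a b} := by
  have hsub : G.edgeFinset ⊆
      ({p : V × V | r p.1 p.2} : Finset (V × V)).image fun p => s(p.1, p.2) := by
    intro e he
    induction e with
    | _ a b =>
      rcases hr a b (G.mem_edgeFinset.1 he) with hab | hba
      · exact mem_image.2 ⟨(a, b), by simpa using hab, rfl⟩
      · exact mem_image.2 ⟨(b, a), by simpa using hba, Sym2.eq_swap⟩
  calc _ ≤ _ := card_le_card hsub
    _ ≤ _ := card_image_le
    _ = _ := by simp only [card_filter, ← univ_product_univ, sum_product]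

def dyadicRoundings (L a : ℕ) : Finset ℕ :=
  (range (L + 1)).biUnion fun k => {a / 2 ^ k * 2 ^ k, (a / 2 ^ k + 1) * 2 ^ k}

lemma mem_dyadicRoundings {L a b : ℕ} :
    b ∈ dyadicRoundings L a ↔
      ∃ k ≤ L, b = a / 2 ^ k * 2 ^ k ∨ b = (a / 2 ^ k + 1) * 2 ^ k := by
  simp [dyadicRoundings]

lemma card_dyadicRoundings_le (L a : ℕ) : #(dyadicRoundings L a) ≤ 2 * (L + 1) :=
  calc _ ≤ ∑ _k ∈ range (L + 1), 2 :=
        card_biUnion_le.trans (sum_le_sum fun _ _ => card_le_two)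
    _ = 2 * (L + 1) := by simp [mul_comm]

lemma exists_div_two_pow_eq_succ {a b : ℕ} (h : a < b) : ∃ k, b / 2 ^ k = a / 2 ^ k + 1 := by
  induction b using Nat.strong_induction_on generalizing a with
  | _ b ih =>
    by_cases hsucc : b = a + 1
    · exact ⟨0, by simpa⟩
    · have hlt : a / 2 < b / 2 := by omega
      obtain ⟨k, hk⟩ := ih (b / 2) (by omega) hlt
      exact ⟨k + 1, by simpa [pow_succ', ← Nat.div_div_eq_div_mul] using hk⟩

def dyadicSpanner (n : ℕ) : SimpleGraph (Fin n) :=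
  SimpleGraph.fromRel fun a b => (b : ℕ) ∈ dyadicRoundings (Nat.log 2 n) a

lemma dyadicSpanner_hasStraightPathHop {n : ℕ} {i j : Fin n} (hij : i < j) :
    HasStraightPathHop (dyadicSpanner n) i j 2 := by
  obtain ⟨k, hk⟩ := exists_div_two_pow_eq_succ hij
  set m := (j : ℕ) / 2 ^ k * 2 ^ k with hm_down
  have hm_up : m = ((i : ℕ) / 2 ^ k + 1) * 2 ^ k := by rw [hm_down, hk]
  have him : (i : ℕ) < m := by
    rw [hm_up, add_mul, one_mul]
    exact Nat.lt_div_mul_add (pow_pos two_pos k)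
  have hmj : m ≤ j := Nat.div_mul_le_self _ _
  have hkm : 2 ^ k ≤ m := hm_up ▸ Nat.le_mul_of_pos_left _ (Nat.succ_pos _)
  have hkL : k ≤ Nat.log 2 n := Nat.le_log_of_pow_le one_lt_two (by omega)
  have hi_m : m ∈ dyadicRoundings (Nat.log 2 n) i :=
    mem_dyadicRoundings.2 ⟨k, hkL, .inr hm_up⟩
  have hj_m : m ∈ dyadicRoundings (Nat.log 2 n) j := mem_dyadicRoundings.2 ⟨k, hkL, .inl rfl⟩
  rcases hmj.eq_or_lt with hm_eq | hm_lt
  · exact .of_adj hij ⟨hij.ne, .inl (show (j : ℕ) ∈ _ from hm_eq ▸ hi_m)⟩ one_le_two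
  · let m' : Fin n := ⟨m, hm_lt.trans j.is_lt⟩
    exact .of_adj_adj (m := m') him hm_lt ⟨Fin.ne_of_lt him, .inl hi_m⟩
      ⟨Fin.ne_of_lt hm_lt, .inr hj_m⟩ le_rfl

lemma card_edgeFinset_dyadicSpanner_le (n : ℕ) :
    #(dyadicSpanner n).edgeFinset ≤ n * (2 * (Nat.log 2 n + 1)) :=
  calc #(dyadicSpanner n).edgeFinset
        ≤ ∑ a : Fin n, #{b : Fin n | (b : ℕ) ∈ dyadicRoundings (Nat.log 2 n) a} :=
        (dyadicSpanner n).card_edgeFinset_le_sum_card_filter _ fun _ _ hab => hab.2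
    _ ≤ ∑ _a : Fin n, 2 * (Nat.log 2 n + 1) := sum_le_sum fun a _ =>
        (card_le_card_of_injOn Fin.val (fun b hb => by simpa using hb)
          Fin.val_injective.injOn).trans (card_dyadicRoundings_le _ _)
    _ = n * (2 * (Nat.log 2 n + 1)) := by simp

lemma natLog_two_add_one_le_two_mul_logb {n : ℕ} (hn : 2 ≤ n) :
    (Nat.log 2 n + 1 : ℝ) ≤ 2 * Real.logb 2 n := by
  have hone : 1 ≤ Real.logb 2 n := by
    rw [Real.le_logb_iff_rpow_le one_lt_two (by positivity)]
    exact_mod_cast (by simpa using hn : (2 : ℝ) ^ (1 : ℝ) ≤ n)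
  have hlog := Real.natLog_le_logb n 2
  push_cast at hlog
  linarith

theorem stmt_11 :
    ∃ C : ℝ, 0 < C ∧
      ∀ n : ℕ, 2 ≤ n →
        ∃ G : SimpleGraph (Fin n),
          (G.edgeFinset.card : ℝ) ≤ C * (n : ℝ) * Real.log (n : ℝ) ∧
          ∀ i j : Fin n, i < j → HasStraightPathHop G i j 2 := by
  refine ⟨4 / Real.log 2, by positivity, fun n hn => ⟨dyadicSpanner n, ?_,
    fun i j hij => dyadicSpanner_hasStraightPathHop hij⟩⟩
  calc (#(dyadicSpanner n).edgeFinset : ℝ) ≤ n * (2 * (Nat.log 2 n + 1)) := by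
        exact_mod_cast card_edgeFinset_dyadicSpanner_le n
    _ ≤ n * (2 * (2 * Real.logb 2 n)) := by
        gcongr; exact natLog_two_add_one_le_two_mul_logb hn
    _ = 4 / Real.log 2 * n * Real.log n := by rw [Real.logb]; ring
end
end

section
/- Let B and C be disjoint finite nonempty sets and let ρ ∈ (0,1). Include each pair (b,c) ∈ B × C independently with probability ρ, and let Y be the number of vertices c ∈ C incident to at least one included pair. Let M = |C|·(1 − exp(−ρ·|B|)). Then (i) E[Y] ≥ M, and (ii) P[Y ≤ (3/4)·E[Y]] ≤ exp(−M/32). -/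
open Finset

attribute [local instance] Classical.propDecidable

noncomputable section

namespace BipRandom


variable {α β : Type}

lemma w_total (x y : ℝ) (S : Finset β) :
    ∑ U ∈ S.powerset, x ^ U.card * y ^ (S.card - U.card) = (x + y) ^ S.card := by
  rw [← Finset.prod_const, Finset.prod_add]
  refine Finset.sum_congr rfl fun U hU => ?_
  rw [Finset.prod_const, Finset.prod_const, Finset.card_sdiff_of_subset (Finset.mem_powerset.mp hU)]

lemma w_one (ρ : ℝ) (S : Finset β) :
    ∑ U ∈ S.powerset, ρ ^ U.card * (1 - ρ) ^ (S.card - U.card) = 1 := by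
  rw [w_total]; norm_num

lemma split [DecidableEq β] (ρ : ℝ) (S S' : Finset β) (h : Disjoint S S') (G H : Finset β → ℝ) :
    ∑ T ∈ (S ∪ S').powerset,
        ρ ^ T.card * (1 - ρ) ^ ((S ∪ S').card - T.card) * (G (T ∩ S) * H (T ∩ S'))
      = (∑ U ∈ S.powerset, ρ ^ U.card * (1 - ρ) ^ (S.card - U.card) * G U) *
        (∑ V ∈ S'.powerset, ρ ^ V.card * (1 - ρ) ^ (S'.card - V.card) * H V) := by
  rw [Finset.sum_mul_sum, ← Finset.sum_product']
  refine Finset.sum_nbij' (fun T => (T ∩ S, T ∩ S')) (fun P => P.1 ∪ P.2) ?_ ?_ ?_ ?_ ?_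
  · intro T hT
    simp only [Finset.mem_product, Finset.mem_powerset]
    exact ⟨Finset.inter_subset_right, Finset.inter_subset_right⟩
  · intro P hP
    simp only [Finset.mem_product, Finset.mem_powerset] at hP ⊢
    exact Finset.union_subset_union hP.1 hP.2
  · intro T hT
    have hT' := Finset.mem_powerset.mp hT
    show T ∩ S ∪ T ∩ S' = T
    rw [← Finset.inter_union_distrib_left, Finset.inter_eq_left.mpr hT']
  · intro P hP
    simp only [Finset.mem_product, Finset.mem_powerset] at hP
    have h1 : (P.1 ∪ P.2) ∩ S = P.1 := by
      rw [Finset.union_inter_distrib_right, Finset.inter_eq_left.mpr hP.1,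
        Finset.disjoint_iff_inter_eq_empty.mp (h.symm.mono_left hP.2), Finset.union_empty]
    have h2 : (P.1 ∪ P.2) ∩ S' = P.2 := by
      rw [Finset.union_inter_distrib_right, Finset.inter_eq_left.mpr hP.2,
        Finset.disjoint_iff_inter_eq_empty.mp (h.mono_left hP.1), Finset.empty_union]
    show ((P.1 ∪ P.2) ∩ S, (P.1 ∪ P.2) ∩ S') = P
    rw [h1, h2]
  · intro T hT
    have hT' := Finset.mem_powerset.mp hT
    have hdisj : Disjoint (T ∩ S) (T ∩ S') :=
      h.mono Finset.inter_subset_right Finset.inter_subset_right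
    have hun : (T ∩ S) ∪ (T ∩ S') = T := by
      rw [← Finset.inter_union_distrib_left, Finset.inter_eq_left.mpr hT']
    have hcardT : (T ∩ S).card + (T ∩ S').card = T.card := by
      rw [← Finset.card_union_of_disjoint hdisj, hun]
    have hcardU : (S ∪ S').card = S.card + S'.card := Finset.card_union_of_disjoint h
    have h1 : (T ∩ S).card ≤ S.card := Finset.card_le_card Finset.inter_subset_right
    have h2 : (T ∩ S').card ≤ S'.card := Finset.card_le_card Finset.inter_subset_right
    have hTle : T.card ≤ (S ∪ S').card := Finset.card_le_card hT'
    have hexp : (S ∪ S').card - T.card = (S.card - (T ∩ S).card) + (S'.card - (T ∩ S').card) := by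
      omega
    rw [hexp, ← hcardT, pow_add, pow_add]
    ring


variable {α β : Type}

lemma prodSplit (ρ : ℝ) (B : Finset α) (f : α → Finset (α × α) → ℝ) (C : Finset α) :
    ∑ T ∈ (B ×ˢ C).powerset,
        ρ ^ T.card * (1 - ρ) ^ ((B ×ˢ C).card - T.card) * ∏ c ∈ C, f c (T ∩ B ×ˢ {c})
      = ∏ c ∈ C, ∑ U ∈ (B ×ˢ {c}).powerset,
          ρ ^ U.card * (1 - ρ) ^ ((B ×ˢ {c}).card - U.card) * f c U := by
  induction C using Finset.induction_on with
  | empty => simp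
  | @insert c C hc ih =>
    have hsplit : B ×ˢ insert c C = (B ×ˢ {c}) ∪ (B ×ˢ C) := by
      ext ⟨a, b⟩
      simp only [Finset.mem_product, Finset.mem_insert, Finset.mem_union,
        Finset.mem_singleton]
      tauto
    have hdisj : Disjoint (B ×ˢ {c}) (B ×ˢ C) := by
      rw [Finset.disjoint_left]
      rintro ⟨a, b⟩ hab hab'
      simp only [Finset.mem_product, Finset.mem_singleton] at hab hab'
      exact hc (hab.2 ▸ hab'.2)
    have key : ∀ T ∈ ((B ×ˢ {c}) ∪ (B ×ˢ C)).powerset,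
        ρ ^ T.card * (1 - ρ) ^ (((B ×ˢ {c}) ∪ (B ×ˢ C)).card - T.card) *
            ∏ c' ∈ insert c C, f c' (T ∩ B ×ˢ {c'})
          = ρ ^ T.card * (1 - ρ) ^ (((B ×ˢ {c}) ∪ (B ×ˢ C)).card - T.card) *
            (f c (T ∩ B ×ˢ {c}) *
              ∏ c' ∈ C, f c' ((T ∩ B ×ˢ C) ∩ B ×ˢ {c'})) := by
      intro T hT
      rw [Finset.prod_insert hc]
      congr 1
      congr 1
      refine Finset.prod_congr rfl fun c' hc' => ?_
      have hsub : B ×ˢ ({c'} : Finset α) ⊆ B ×ˢ C :=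
        Finset.product_subset_product_right (Finset.singleton_subset_iff.mpr hc')
      rw [Finset.inter_assoc, Finset.inter_eq_right.mpr hsub]
    have hs := split ρ (B ×ˢ {c}) (B ×ˢ C) hdisj (f c)
      (fun T' => ∏ c' ∈ C, f c' (T' ∩ B ×ˢ {c'}))
    beta_reduce at hs
    rw [hsplit, Finset.sum_congr rfl key, Finset.prod_insert hc, ← ih]
    exact hs

lemma colSum (ρ x y : ℝ) (B : Finset α) (c : α) :
    ∑ U ∈ (B ×ˢ {c}).powerset,
        ρ ^ U.card * (1 - ρ) ^ ((B ×ˢ {c}).card - U.card) *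
          (if ∃ a, (a, c) ∈ U then x else y)
      = x + (1 - ρ) ^ B.card * (y - x) := by
  have hcard : (B ×ˢ ({c} : Finset α)).card = B.card := by simp
  have key : ∀ U ∈ (B ×ˢ ({c} : Finset α)).powerset,
      ρ ^ U.card * (1 - ρ) ^ ((B ×ˢ {c}).card - U.card) * (if ∃ a, (a, c) ∈ U then x else y)
        = ρ ^ U.card * (1 - ρ) ^ ((B ×ˢ {c}).card - U.card) * x
          + (if U = (∅ : Finset (α × α)) then (1 - ρ) ^ B.card * (y - x) else 0) := by
    intro U hU
    rcases eq_or_ne U ∅ with rfl | hne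
    · simp [hcard]; ring
    · have hcov : ∃ a, (a, c) ∈ U := by
        obtain ⟨⟨a, c'⟩, hm⟩ := Finset.nonempty_iff_ne_empty.mpr hne
        have hmem := Finset.mem_powerset.mp hU hm
        simp only [Finset.mem_product, Finset.mem_singleton] at hmem
        exact ⟨a, hmem.2 ▸ hm⟩
      rw [if_pos hcov, if_neg hne, add_zero]
  rw [Finset.sum_congr rfl key, Finset.sum_add_distrib, ← Finset.sum_mul, w_one,
    Finset.sum_ite_eq' _ (∅ : Finset (α × α)),
    if_pos (Finset.empty_mem_powerset _), one_mul]


variable {α β : Type}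

lemma covered_col_iff (B C : Finset α) (T : Finset (α × α)) (hT : T ⊆ B ×ˢ C)
    (c : α) : (∃ a, (a, c) ∈ T ∩ B ×ˢ {c}) ↔ ∃ a, (a, c) ∈ T := by
  constructor
  · rintro ⟨a, ha⟩
    exact ⟨a, (Finset.mem_inter.mp ha).1⟩
  · rintro ⟨a, ha⟩
    have hm := hT ha
    simp only [Finset.mem_product] at hm
    exact ⟨a, Finset.mem_inter.mpr ⟨ha, by simp [Finset.mem_product, hm.1]⟩⟩

lemma coveredCount_cast (C : Finset α) (T : Finset (α × α)) :
    (coveredCount C T : ℝ) = ∑ c ∈ C, (if ∃ a, (a, c) ∈ T then (1 : ℝ) else 0) := by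
  rw [coveredCount, Finset.card_filter]
  push_cast
  rfl

/-- expectation of a single column indicator -/
lemma marginal (ρ : ℝ) (B C : Finset α) {c : α} (hc : c ∈ C) :
    ∑ T ∈ (B ×ˢ C).powerset,
        ρ ^ T.card * (1 - ρ) ^ ((B ×ˢ C).card - T.card) *
          (if ∃ a, (a, c) ∈ T then (1 : ℝ) else 0)
      = 1 - (1 - ρ) ^ B.card := by
  have key : ∀ T ∈ (B ×ˢ C).powerset,
      ρ ^ T.card * (1 - ρ) ^ ((B ×ˢ C).card - T.card) *
          (if ∃ a, (a, c) ∈ T then (1 : ℝ) else 0)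
        = ρ ^ T.card * (1 - ρ) ^ ((B ×ˢ C).card - T.card) *
          ∏ c' ∈ C, (fun c' U => if c' = c then (if ∃ a, (a, c) ∈ U then (1 : ℝ) else 0)
            else 1) c' (T ∩ B ×ˢ {c'}) := by
    intro T hT
    congr 1
    rw [Finset.prod_eq_single_of_mem c hc (fun b _ hbc => by simp [hbc])]
    show (if ∃ a, (a, c) ∈ T then (1 : ℝ) else 0)
        = if c = c then (if ∃ a, (a, c) ∈ T ∩ B ×ˢ {c} then (1 : ℝ) else 0) else 1
    rw [if_pos rfl, covered_col_iff B C T (Finset.mem_powerset.mp hT) c]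
  rw [Finset.sum_congr rfl key,
    prodSplit ρ B (fun c' U => if c' = c then (if ∃ a, (a, c) ∈ U then (1 : ℝ) else 0)
      else 1) C]
  rw [Finset.prod_eq_single_of_mem c hc (fun b _ hbc => by
    simp only [if_neg hbc, mul_one]; exact w_one ρ _)]
  simp only [if_pos rfl, if_true]
  rw [colSum ρ 1 0 B c]
  ring

lemma expect_val (ρ : ℝ) (B C : Finset α) :
    ∑ T ∈ (B ×ˢ C).powerset,
        ρ ^ T.card * (1 - ρ) ^ ((B ×ˢ C).card - T.card) * (coveredCount C T : ℝ)
      = C.card * (1 - (1 - ρ) ^ B.card) := by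
  have key : ∀ T ∈ (B ×ˢ C).powerset,
      ρ ^ T.card * (1 - ρ) ^ ((B ×ˢ C).card - T.card) * (coveredCount C T : ℝ)
        = ∑ c ∈ C, ρ ^ T.card * (1 - ρ) ^ ((B ×ˢ C).card - T.card) *
            (if ∃ a, (a, c) ∈ T then (1 : ℝ) else 0) := by
    intro T _
    rw [coveredCount_cast, Finset.mul_sum]
  rw [Finset.sum_congr rfl key, Finset.sum_comm,
    Finset.sum_congr rfl (fun c hc => marginal ρ B C hc), Finset.sum_const,
    nsmul_eq_mul]

lemma mgf (ρ t : ℝ) (B C : Finset α) :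
    ∑ T ∈ (B ×ˢ C).powerset,
        ρ ^ T.card * (1 - ρ) ^ ((B ×ˢ C).card - T.card) *
          Real.exp (-(t * (coveredCount C T : ℝ)))
      = (1 + (1 - (1 - ρ) ^ B.card) * (Real.exp (-t) - 1)) ^ C.card := by
  have key : ∀ T ∈ (B ×ˢ C).powerset,
      ρ ^ T.card * (1 - ρ) ^ ((B ×ˢ C).card - T.card) *
          Real.exp (-(t * (coveredCount C T : ℝ)))
        = ρ ^ T.card * (1 - ρ) ^ ((B ×ˢ C).card - T.card) *
          ∏ c ∈ C, (fun c U => if ∃ a, (a, c) ∈ U then Real.exp (-t) else 1) c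
            (T ∩ B ×ˢ {c}) := by
    intro T hT
    congr 1
    have h1 : -(t * (coveredCount C T : ℝ))
        = ∑ c ∈ C, -(t * (if ∃ a, (a, c) ∈ T then (1 : ℝ) else 0)) := by
      rw [coveredCount_cast, Finset.mul_sum, ← Finset.sum_neg_distrib]
    rw [h1, Real.exp_sum]
    refine Finset.prod_congr rfl fun c hc => ?_
    beta_reduce
    rw [covered_col_iff B C T (Finset.mem_powerset.mp hT) c]
    split_ifs <;> simp
  rw [Finset.sum_congr rfl key,
    prodSplit ρ B (fun c U => if ∃ a, (a, c) ∈ U then Real.exp (-t) else 1) C,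
    Finset.prod_congr rfl (fun c _ => colSum ρ (Real.exp (-t)) 1 B c),
    Finset.prod_const]
  congr 1
  ring


end BipRandom

theorem stmt_13 (α : Type) (B C : Finset α) (hd : Disjoint B C)
    (hB : B.Nonempty) (hC : C.Nonempty) (ρ : ℝ) (hρ : ρ ∈ Set.Ioo (0 : ℝ) 1) :
    (C.card : ℝ) * (1 - Real.exp (-(ρ * (B.card : ℝ)))) ≤
        bipExpect (B ×ˢ C) ρ (fun T => (coveredCount C T : ℝ)) ∧
      bipProb (B ×ˢ C) ρ (fun T => (coveredCount C T : ℝ) ≤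
          (3 : ℝ) / 4 * bipExpect (B ×ˢ C) ρ (fun T' => (coveredCount C T' : ℝ))) ≤
        Real.exp (-((C.card : ℝ) * (1 - Real.exp (-(ρ * (B.card : ℝ))))) / 32) := by
  obtain ⟨h0ρ, h1ρ⟩ := hρ
  have hq0 : (0:ℝ) ≤ 1 - ρ := by linarith
  have hqle1 : (1 - ρ) ^ B.card ≤ 1 := pow_le_one₀ hq0 (by linarith)
  have hqnn : (0:ℝ) ≤ (1 - ρ) ^ B.card := pow_nonneg hq0 _
  have hE : bipExpect (B ×ˢ C) ρ (fun T => (coveredCount C T : ℝ))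
      = (C.card : ℝ) * (1 - (1 - ρ) ^ B.card) := by
    simp only [bipExpect]
    exact BipRandom.expect_val ρ B C
  have hq : (1 - ρ) ^ B.card ≤ Real.exp (-(ρ * (B.card : ℝ))) := by
    have h2 : 1 - ρ ≤ Real.exp (-ρ) := by linarith [Real.add_one_le_exp (-ρ)]
    calc (1 - ρ) ^ B.card ≤ Real.exp (-ρ) ^ B.card := pow_le_pow_left₀ hq0 h2 _
      _ = Real.exp (-(ρ * (B.card : ℝ))) := by
          rw [← Real.exp_nat_mul]; congr 1; ring
  have hM : (C.card : ℝ) * (1 - Real.exp (-(ρ * (B.card : ℝ))))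
      ≤ (C.card : ℝ) * (1 - (1 - ρ) ^ B.card) :=
    mul_le_mul_of_nonneg_left (by linarith) (Nat.cast_nonneg _)
  have hμnn : (0:ℝ) ≤ (C.card : ℝ) * (1 - (1 - ρ) ^ B.card) :=
    mul_nonneg (Nat.cast_nonneg _) (by linarith)
  refine ⟨by rw [hE]; exact hM, ?_⟩
  -- Chernoff bound with t = 3/10
  set E₀ := bipExpect (B ×ˢ C) ρ (fun T' => (coveredCount C T' : ℝ)) with hE₀def
  have hwnn : ∀ T : Finset (α × α),
      0 ≤ ρ ^ T.card * (1 - ρ) ^ ((B ×ˢ C).card - T.card) := fun T =>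
    mul_nonneg (pow_nonneg h0ρ.le _) (pow_nonneg hq0 _)
  have he' : Real.exp (-(3/10 : ℝ)) ≤ 119/160 := by
    have hsum := Real.sum_le_exp_of_nonneg (by norm_num : (0:ℝ) ≤ 3/10) 4
    rw [Finset.sum_range_succ, Finset.sum_range_succ, Finset.sum_range_succ,
      Finset.sum_range_succ, Finset.sum_range_zero] at hsum
    norm_num [Nat.factorial] at hsum
    rw [Real.exp_neg]
    rw [show (119:ℝ)/160 = ((160:ℝ)/119)⁻¹ by norm_num]
    exact inv_anti₀ (by norm_num) (by linarith)
  have step1 : bipProb (B ×ˢ C) ρ (fun T => (coveredCount C T : ℝ) ≤ (3:ℝ)/4 * E₀)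
      ≤ ∑ T ∈ (B ×ˢ C).powerset.filter
          (fun T => (coveredCount C T : ℝ) ≤ (3:ℝ)/4 * E₀),
          ρ ^ T.card * (1 - ρ) ^ ((B ×ˢ C).card - T.card) *
            Real.exp ((3/10) * ((3:ℝ)/4 * E₀ - (coveredCount C T : ℝ))) := by
    rw [bipProb]
    refine Finset.sum_le_sum fun T hT => ?_
    have hA : (coveredCount C T : ℝ) ≤ (3:ℝ)/4 * E₀ := (Finset.mem_filter.mp hT).2
    refine le_mul_of_one_le_right (hwnn T) (Real.one_le_exp ?_)
    have : (0:ℝ) ≤ (3:ℝ)/4 * E₀ - (coveredCount C T : ℝ) := by linarith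
    positivity
  have step2 : ∑ T ∈ (B ×ˢ C).powerset.filter
          (fun T => (coveredCount C T : ℝ) ≤ (3:ℝ)/4 * E₀),
          ρ ^ T.card * (1 - ρ) ^ ((B ×ˢ C).card - T.card) *
            Real.exp ((3/10) * ((3:ℝ)/4 * E₀ - (coveredCount C T : ℝ)))
      ≤ ∑ T ∈ (B ×ˢ C).powerset,
          ρ ^ T.card * (1 - ρ) ^ ((B ×ˢ C).card - T.card) *
            Real.exp ((3/10) * ((3:ℝ)/4 * E₀ - (coveredCount C T : ℝ))) :=
    Finset.sum_le_sum_of_subset_of_nonneg (Finset.filter_subset _ _)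
      (fun T _ _ => mul_nonneg (hwnn T) (Real.exp_pos _).le)
  have step3 : ∑ T ∈ (B ×ˢ C).powerset,
          ρ ^ T.card * (1 - ρ) ^ ((B ×ˢ C).card - T.card) *
            Real.exp ((3/10) * ((3:ℝ)/4 * E₀ - (coveredCount C T : ℝ)))
      = Real.exp ((3/10) * ((3:ℝ)/4 * E₀)) *
          ((1 + (1 - (1 - ρ) ^ B.card) * (Real.exp (-(3/10 : ℝ)) - 1)) ^ C.card) := by
    rw [← BipRandom.mgf ρ (3/10) B C, Finset.mul_sum]
    refine Finset.sum_congr rfl fun T hT => ?_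
    rw [show (3/10 : ℝ) * ((3:ℝ)/4 * E₀ - (coveredCount C T : ℝ))
        = (3/10) * ((3:ℝ)/4 * E₀) + -((3/10) * (coveredCount C T : ℝ)) by ring,
      Real.exp_add]
    ring
  have hbase : (0:ℝ) ≤ 1 + (1 - (1 - ρ) ^ B.card) * (Real.exp (-(3/10 : ℝ)) - 1) := by
    nlinarith [Real.exp_pos (-(3/10 : ℝ)), hqnn, hqle1]
  have step4 : (1 + (1 - (1 - ρ) ^ B.card) * (Real.exp (-(3/10 : ℝ)) - 1)) ^ C.card
      ≤ Real.exp ((C.card : ℝ) *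
          ((1 - (1 - ρ) ^ B.card) * (Real.exp (-(3/10 : ℝ)) - 1))) := by
    rw [Real.exp_nat_mul]
    refine pow_le_pow_left₀ hbase ?_ _
    linarith [Real.add_one_le_exp ((1 - (1 - ρ) ^ B.card) * (Real.exp (-(3/10 : ℝ)) - 1))]
  have hμE : E₀ = (C.card : ℝ) * (1 - (1 - ρ) ^ B.card) := hE
  have step5 : Real.exp ((3/10) * ((3:ℝ)/4 * E₀)) *
        Real.exp ((C.card : ℝ) *
          ((1 - (1 - ρ) ^ B.card) * (Real.exp (-(3/10 : ℝ)) - 1)))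
      ≤ Real.exp (-((C.card : ℝ) * (1 - Real.exp (-(ρ * (B.card : ℝ))))) / 32) := by
    rw [← Real.exp_add, Real.exp_le_exp]
    have hfinal : (3/10 : ℝ) * ((3:ℝ)/4) + Real.exp (-(3/10 : ℝ)) - 1 ≤ -(1/32 : ℝ) := by
      nlinarith [he']
    have hμM : (C.card : ℝ) * (1 - Real.exp (-(ρ * (B.card : ℝ))))
        ≤ (C.card : ℝ) * (1 - (1 - ρ) ^ B.card) := hM
    rw [hμE]
    nlinarith [hμnn, hM, he']
  calc bipProb (B ×ˢ C) ρ (fun T => (coveredCount C T : ℝ) ≤ (3:ℝ)/4 * E₀)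
      ≤ _ := step1
    _ ≤ _ := step2
    _ = _ := step3
    _ ≤ Real.exp ((3/10) * ((3:ℝ)/4 * E₀)) *
          Real.exp ((C.card : ℝ) *
            ((1 - (1 - ρ) ^ B.card) * (Real.exp (-(3/10 : ℝ)) - 1))) :=
        mul_le_mul_of_nonneg_left step4 (Real.exp_pos _).le
    _ ≤ _ := step5
end
end
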